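/- arXiv:1504.05353 — 10 statements merged into one kernel-verified Lean document; each statement's English description precedes it below -/
import Mathlib

section
/- Let Π be a uniformly random bijection from R to R' with |R| = |R'| = n, τ' : R' → V' a table, σ : R → V' a fixed function, r ∈ R, r' ∈ R'. Then P[Π(r) = r' ∧ σ = τ' ∘ Π] equals (∏_{v' ∈ image(τ')} (#_{τ'}(v'))!) / (#_{τ'}(τ'(r')) · n!) if there is a bijection π̂ with σ = τ' ∘ π̂ and σ(r) = τ'(r'), and 0 otherwise. -/
/-!
Fix one bijection `πh` with `σ = τ' ∘ πh`. Then `π ↦ π ∘ πh⁻¹` identifies the bijections `π` with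
`σ = τ' ∘ π` with the permutations of `R'` preserving `τ'`, whose number is `∏ (#_{τ'} v')!`.
Grouping these `π` by the value `π r`, which ranges over the fibre of `τ'` through `r'`, all
groups have the same size, because composing with the swap of two points of that fibre preserves
`τ'`. Hence the group with `π r = r'` has size `∏ (#_{τ'} v')! / #_{τ'}(τ' r')`.
-/

open Finset Equiv

section Counting

variable {R R' V' : Type*} [Fintype R] [Fintype R'] [DecidableEq R] [DecidableEq R']
  [DecidableEq V']

theorem card_perm_comp_eq_self (τ' : R' → V') :
    #{g : Perm R' | τ' ∘ g = τ'} = ∏ v' ∈ univ.image τ', (#{s' | τ' s' = v'}).factorial := by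
  rw [← Fintype.card_subtype, DomMulAct.stabilizer_card']
  simp only [Fintype.card_subtype]

theorem card_equiv_comp_eq_of_comp_eq {τ' : R' → V'} {σ : R → V'} (πh : R ≃ R')
    (hπh : σ = τ' ∘ πh) : #{π : R ≃ R' | σ = τ' ∘ π} = #{g : Perm R' | τ' ∘ g = τ'} := by
  refine card_equiv (equivCongr πh (Equiv.refl R')) fun π => ?_
  simp only [mem_filter, mem_univ, true_and, hπh, equivCongr_refl_right, coe_trans,
    ← Function.comp_assoc]
  rw [comp_symm_eq, eq_comm]

theorem card_equiv_apply_eq_of_apply_eq {τ' : R' → V'} {σ : R → V'} (r : R) {s' r' : R'}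
    (hs' : τ' s' = τ' r') :
    #{π : R ≃ R' | π r = s' ∧ σ = τ' ∘ π} = #{π : R ≃ R' | π r = r' ∧ σ = τ' ∘ π} := by
  have hswap : τ' ∘ swap s' r' = τ' := funext (apply_swap_eq_self hs')
  refine card_equiv (equivCongr (Equiv.refl R) (swap s' r')) fun π => ?_
  simp only [mem_filter, mem_univ, true_and, equivCongr_refl_left, coe_trans, Function.comp_apply,
    swap_apply_eq_iff, swap_apply_right, ← Function.comp_assoc, hswap]

theorem card_fibre_mul_card_equiv_apply_eq {τ' : R' → V'} {σ : R → V'} {r : R} {r' : R'}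
    (hr : σ r = τ' r') :
    #{s' | τ' s' = τ' r'} * #{π : R ≃ R' | π r = r' ∧ σ = τ' ∘ π} =
      #{π : R ≃ R' | σ = τ' ∘ π} := by
  have hmaps : ∀ π ∈ ({π : R ≃ R' | σ = τ' ∘ π} : Finset _),
      π r ∈ ({s' | τ' s' = τ' r'} : Finset R') := by
    intro π hπ
    rw [mem_filter] at hπ ⊢
    exact ⟨mem_univ _, by rw [← hr, hπ.2, Function.comp_apply]⟩
  rw [card_eq_sum_card_fiberwise hmaps, ← smul_eq_mul, ← sum_const]
  refine sum_congr rfl fun s' hs' => ?_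
  rw [filter_filter, ← card_equiv_apply_eq_of_apply_eq r (mem_filter.1 hs').2]
  simp only [and_comm]

end Counting

theorem stmt4_general {R R' V' : Type*} [Fintype R] [Fintype R']
    [DecidableEq R] [DecidableEq R'] [DecidableEq V']
    (τ' : R' → V') (σ : R → V') (r : R) (r' : R') :
    (((Finset.univ.filter (fun π : R ≃ R' => π r = r' ∧ σ = τ' ∘ π)).card : ℝ)
        / (Nat.factorial (Fintype.card R)) =
      if ∃ πh : R ≃ R', σ = τ' ∘ πh ∧ σ r = τ' r' then
        (∏ v' ∈ Finset.univ.image τ',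
          ((Nat.factorial (Finset.univ.filter (fun s' : R' => τ' s' = v')).card : ℝ)))
          / (((Finset.univ.filter (fun s' : R' => τ' s' = τ' r')).card : ℝ)
              * (Nat.factorial (Fintype.card R)))
      else 0) := by
  split_ifs with h
  · obtain ⟨πh, hπh, hr⟩ := h
    have hcount := card_fibre_mul_card_equiv_apply_eq hr
    rw [card_equiv_comp_eq_of_comp_eq πh hπh, card_perm_comp_eq_self] at hcount
    have hfibre : (#{s' | τ' s' = τ' r'} : ℝ) ≠ 0 :=
      Nat.cast_ne_zero.2 (card_ne_zero.2 ⟨r', by simp⟩)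
    rw [← Nat.cast_prod, ← hcount, Nat.cast_mul, mul_div_mul_left _ _ hfibre]
  · rw [filter_false_of_mem, card_empty, Nat.cast_zero, zero_div]
    rintro π - ⟨hπr, hπ⟩
    exact h ⟨π, hπ, by rw [hπ, Function.comp_apply, hπr]⟩

/-- For a uniformly random bijection `Π : R → R'` (|R| = |R'| = n),
`P[Π(r) = r' ∧ σ = τ' ∘ Π] = (∏_{v'} #_{τ'}(v')!) / (#_{τ'}(τ'(r')) · n!)` if some
bijection `πh` with `σ = τ' ∘ πh` and `σ(r) = τ'(r')` exists, and `0` otherwise. -/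
theorem stmt4 {R R' V' : Type*} [Fintype R] [Fintype R'] [Fintype V']
    [DecidableEq R] [DecidableEq R'] [DecidableEq V']
    (hcard : Fintype.card R = Fintype.card R')
    (τ' : R' → V') (σ : R → V') (r : R) (r' : R') :
    (((Finset.univ.filter (fun π : R ≃ R' => π r = r' ∧ σ = τ' ∘ π)).card : ℝ)
        / (Nat.factorial (Fintype.card R)) =
      if ∃ πh : R ≃ R', σ = τ' ∘ πh ∧ σ r = τ' r' then
        (∏ v' ∈ Finset.univ.image τ',
          ((Nat.factorial (Finset.univ.filter (fun s' : R' => τ' s' = v')).card : ℝ)))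
          / (((Finset.univ.filter (fun s' : R' => τ' s' = τ' r')).card : ℝ)
              * (Nat.factorial (Fintype.card R)))
      else 0) :=
  stmt4_general τ' σ r r'
end

section
/- Let Δ be a deterministic anonymization (for each private table τ there is a unique released table Δ(τ)), with |R| = |R'|. If the released table τ' is not k-anonymous (some record r' has fewer than k records sharing its value), then (Δ, τ') is not P k-anonymous: there exists a distribution on private tables (namely a point mass on some τ with Δ(τ) = τ' ∘ π for some bijection π) and records r ∈ R, r' ∈ R' such that P[Π(r) = r' | T' = τ'] = 1/#_{τ'}(τ'(r')) > 1/k. -/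
/-! Fix a private table `τ` with `Δ τ = τ' ∘ π` and the record `r = π⁻¹ r'`. Among the bijections
`σ` with `Δ τ = τ' ∘ σ`, the image `σ r` ranges over the `τ'`-class of `r'`, and composing with
the transposition of two records in that class is a bijection between the corresponding fibres.
So all fibres have the same size and `P[Π(r) = r' | T' = τ'] = 1 / #_{τ'}(τ'(r'))`. -/

open Finset

theorem Function.comp_swap_of_apply_eq {β γ : Type*} [DecidableEq β] {f : β → γ} {b b' : β}
    (h : f b = f b') : f ∘ Equiv.swap b b' = f := by
  funext x
  rw [Function.comp_apply, Equiv.swap_apply_def]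
  split_ifs with hxb hxb'
  exacts [hxb ▸ h.symm, hxb' ▸ h, rfl]

section FibresOfConsistentEquivs

variable {α β γ : Type*} [Fintype α] [Fintype β] [DecidableEq α] [DecidableEq β] [DecidableEq γ]

theorem card_filter_apply_eq_and_comp_eq_of_apply_eq (f : β → γ) (g : α → γ) (a : α)
    {b b' : β} (h : f b = f b') :
    #{σ : α ≃ β | σ a = b ∧ g = f ∘ σ} = #{σ : α ≃ β | σ a = b' ∧ g = f ∘ σ} := by
  have hswap : f ∘ Equiv.swap b b' = f := Function.comp_swap_of_apply_eq h
  have hinv (σ : α ≃ β) : (σ.trans (Equiv.swap b b')).trans (Equiv.swap b b') = σ := by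
    ext; simp
  refine card_nbij' (fun σ => σ.trans (Equiv.swap b b')) (fun σ => σ.trans (Equiv.swap b b'))
    ?_ ?_ (fun σ _ => hinv σ) (fun σ _ => hinv σ)
  all_goals
    intro σ hσ
    simp only [coe_filter, mem_univ, true_and, Set.mem_ofPred_eq] at hσ ⊢
    refine ⟨by simp [hσ.1], ?_⟩
    rw [Equiv.coe_trans, ← Function.comp_assoc, hswap, hσ.2]

theorem card_filter_comp_eq_eq_mul (f : β → γ) (g : α → γ) (a : α) {b₀ : β}
    (h : g a = f b₀) :
    #{σ : α ≃ β | g = f ∘ σ} = #{b | f b = f b₀} * #{σ : α ≃ β | σ a = b₀ ∧ g = f ∘ σ} := by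
  have hmaps : ∀ σ ∈ ({σ : α ≃ β | g = f ∘ σ} : Finset _),
      σ a ∈ ({b | f b = f b₀} : Finset β) := by
    intro σ hσ
    simp only [mem_filter, mem_univ, true_and] at hσ ⊢
    rw [← h, hσ, Function.comp_apply]
  rw [card_eq_sum_card_fiberwise hmaps, ← smul_eq_mul, ← sum_const]
  refine sum_congr rfl fun b hb => ?_
  rw [filter_filter, ← card_filter_apply_eq_and_comp_eq_of_apply_eq f g a (mem_filter.1 hb).2]
  simp only [and_comm]

end FibresOfConsistentEquivs

theorem stmt5_general {R R' V V' : Type*} [Fintype R] [Fintype R']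
    [DecidableEq R] [DecidableEq R'] [DecidableEq V']
    (Δ : (R → V) → (R → V')) (τ' : R' → V') (k : ℕ)
    (hreach : ∃ (τ : R → V) (π : R ≃ R'), Δ τ = τ' ∘ π)
    (hnotk : ∃ r'0 : R',
      (Finset.univ.filter (fun s' : R' => τ' s' = τ' r'0)).card < k) :
    ∃ (τ : R → V) (r : R) (r' : R'),
      0 < (Finset.univ.filter (fun π : R ≃ R' => Δ τ = τ' ∘ π)).card ∧
      ((Finset.univ.filter (fun π : R ≃ R' => π r = r' ∧ Δ τ = τ' ∘ π)).card : ℝ) /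
          ((Finset.univ.filter (fun π : R ≃ R' => Δ τ = τ' ∘ π)).card : ℝ)
        = 1 / ((Finset.univ.filter (fun s' : R' => τ' s' = τ' r')).card : ℝ) ∧
      (1 : ℝ) / (k : ℝ)
        < 1 / ((Finset.univ.filter (fun s' : R' => τ' s' = τ' r')).card : ℝ) := by
  obtain ⟨τ, π, hτ⟩ := hreach
  obtain ⟨r', hclass⟩ := hnotk
  have hclass_pos : 0 < #{s' | τ' s' = τ' r'} := card_pos.2 ⟨r', by simp⟩
  have hfibre_pos : 0 < #{σ : R ≃ R' | σ (π.symm r') = r' ∧ Δ τ = τ' ∘ σ} :=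
    card_pos.2 ⟨π, by simp [hτ]⟩
  refine ⟨τ, π.symm r', r', card_pos.2 ⟨π, by simp [hτ]⟩, ?_,
    one_div_lt_one_div_of_lt (by exact_mod_cast hclass_pos) (by exact_mod_cast hclass)⟩
  rw [card_filter_comp_eq_eq_mul τ' (Δ τ) (π.symm r') (b₀ := r') (by simp [hτ]),
    Nat.cast_mul]
  field_simp

/-- Lemma 2: if `Δ` is deterministic, `τ'` is reachable, and `τ'` is
not k-anonymous, then `(Δ, τ')` is not Pk-anonymous: there is a point-mass private
table `τ` and records `r, r'` with conditional probability
`P[Π(r) = r' | T' = τ'] = 1/#_{τ'}(τ'(r')) > 1/k`. -/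
theorem stmt5 {R R' V V' : Type*} [Fintype R] [Fintype R'] [Fintype V'] [Fintype V]
    [DecidableEq R] [DecidableEq R'] [DecidableEq V'] [DecidableEq V]
    (hcard : Fintype.card R = Fintype.card R')
    (Δ : (R → V) → (R → V')) (τ' : R' → V') (k : ℕ) (hk : 0 < k)
    (hreach : ∃ (τ : R → V) (π : R ≃ R'), Δ τ = τ' ∘ π)
    (hnotk : ∃ r'0 : R',
      (Finset.univ.filter (fun s' : R' => τ' s' = τ' r'0)).card < k) :
    ∃ (τ : R → V) (r : R) (r' : R'),
      0 < (Finset.univ.filter (fun π : R ≃ R' => Δ τ = τ' ∘ π)).card ∧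
      ((Finset.univ.filter (fun π : R ≃ R' => π r = r' ∧ Δ τ = τ' ∘ π)).card : ℝ) /
          ((Finset.univ.filter (fun π : R ≃ R' => Δ τ = τ' ∘ π)).card : ℝ)
        = 1 / ((Finset.univ.filter (fun s' : R' => τ' s' = τ' r')).card : ℝ) ∧
      (1 : ℝ) / (k : ℝ)
        < 1 / ((Finset.univ.filter (fun s' : R' => τ' s' = τ' r')).card : ℝ) :=
  stmt5_general Δ τ' k hreach hnotk
end

section
/- For a deterministic privacy mechanism Δ with |R| = |R'| and any positive integer k and released table τ', the following equivalence holds: τ' is k-anonymous if and only if (Δ, τ') is Pk-anonymous. Hence Pk-anonymity is an exact extension of k-anonymity on deterministic mechanisms. -/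
/-!
Fix a private table `f` and write `S` for the bijections `π` with `f = τ' ∘ π`. Post-composing
with the transposition of two records carrying the same value of `τ'` maps `S` to itself, so for
fixed `r` the number of `π ∈ S` with `π r = r'` does not depend on `r'` within the class of
`f r`, and vanishes outside it. Hence `#S = #class · #{π ∈ S | π r = r'}`, and the ratio
`#{π ∈ S | π r = r'} / #S` is `1 / #class` or `0`. A mixture over private tables of such ratios
is at most `1 / k` exactly when every class has at least `k` records; for the converse it suffices
to put all the mass on one table that realises `τ'`.
-/

open Finset

theorem comp_swap_of_apply_eq {α β : Type*} [DecidableEq α] (g : α → β) {b c : α}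
    (hbc : g b = g c) : g ∘ Equiv.swap b c = g := by
  funext x
  rcases eq_or_ne x b with rfl | hxb
  · simp [hbc]
  rcases eq_or_ne x c with rfl | hxc
  · simp [hbc]
  · simp [Equiv.swap_apply_of_ne_of_ne hxb hxc]

section Counting

variable {R R' V' : Type*} [Fintype R] [DecidableEq R] [Fintype R'] [DecidableEq R']
  [DecidableEq V'] (f : R → V') (τ' : R' → V')

theorem card_filter_apply_eq_le_of_apply_eq (r : R) {b c : R'} (hbc : τ' b = τ' c) :
    #{π : R ≃ R' | π r = b ∧ f = τ' ∘ π}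
      ≤ #{π : R ≃ R' | π r = c ∧ f = τ' ∘ π} := by
  refine card_le_card_of_injOn (fun π => π.trans (Equiv.swap b c)) ?_
    fun _ _ _ _ h => Equiv.ext fun x => (Equiv.swap b c).injective (Equiv.ext_iff.mp h x)
  intro π hπ
  simp only [coe_filter, Set.mem_ofPred_eq, mem_univ, true_and] at hπ ⊢
  obtain ⟨hπr, hf⟩ := hπ
  refine ⟨by simp [hπr], ?_⟩
  rw [Equiv.coe_trans, ← Function.comp_assoc, comp_swap_of_apply_eq τ' hbc, hf]

theorem card_filter_apply_eq_of_apply_eq (r : R) {b c : R'} (hbc : τ' b = τ' c) :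
    #{π : R ≃ R' | π r = b ∧ f = τ' ∘ π}
      = #{π : R ≃ R' | π r = c ∧ f = τ' ∘ π} :=
  le_antisymm (card_filter_apply_eq_le_of_apply_eq f τ' r hbc)
    (card_filter_apply_eq_le_of_apply_eq f τ' r hbc.symm)

theorem card_filter_eq_mul_card_filter_apply_eq (r : R) {c : R'} (hc : τ' c = f r) :
    #{π : R ≃ R' | f = τ' ∘ π}
      = #{b | τ' b = τ' c} * #{π : R ≃ R' | π r = c ∧ f = τ' ∘ π} := by
  rw [card_eq_sum_card_fiberwise (f := fun π : R ≃ R' => π r) (t := {b | τ' b = τ' c})]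
  · rw [← smul_eq_mul, ← sum_const]
    refine sum_congr rfl fun b hb => ?_
    rw [filter_filter, filter_congr fun _ _ => and_comm]
    exact card_filter_apply_eq_of_apply_eq f τ' r (mem_filter.mp hb).2
  · intro π hπ
    simp only [coe_filter, Set.mem_ofPred_eq, mem_univ, true_and] at hπ ⊢
    rw [hc, hπ, Function.comp_apply]

theorem card_filter_apply_eq_eq_zero (r : R) {r' : R'} (hr' : τ' r' ≠ f r) :
    #{π : R ≃ R' | π r = r' ∧ f = τ' ∘ π} = 0 := by
  refine card_eq_zero.mpr (filter_eq_empty_iff.mpr fun π _ ⟨hπr, hf⟩ => hr' ?_)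
  rw [hf, Function.comp_apply, hπr]

theorem mul_card_filter_apply_eq_le (k : ℕ)
    (hanon : ∀ r' : R', k ≤ #{s' | τ' s' = τ' r'}) (r : R) (r' : R') :
    k * #{π : R ≃ R' | π r = r' ∧ f = τ' ∘ π} ≤ #{π : R ≃ R' | f = τ' ∘ π} := by
  by_cases hr' : τ' r' = f r
  · rw [card_filter_eq_mul_card_filter_apply_eq f τ' r hr']
    exact Nat.mul_le_mul_right _ (hanon r')
  · simp [card_filter_apply_eq_eq_zero f τ' r hr']

theorem le_card_of_mul_card_filter_apply_eq_le (k : ℕ) (π₀ : R ≃ R')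
    (hπ₀ : f = τ' ∘ π₀) (r' : R')
    (h : k * #{π : R ≃ R' | π (π₀.symm r') = r' ∧ f = τ' ∘ π}
      ≤ #{π : R ≃ R' | f = τ' ∘ π}) :
    k ≤ #{s' | τ' s' = τ' r'} := by
  have hr' : τ' r' = f (π₀.symm r') := by simp [hπ₀]
  have hpos : 0 < #{π : R ≃ R' | π (π₀.symm r') = r' ∧ f = τ' ∘ π} :=
    card_pos.mpr ⟨π₀, by simp [hπ₀]⟩
  rw [card_filter_eq_mul_card_filter_apply_eq f τ' _ hr'] at h
  exact Nat.le_of_mul_le_mul_right h hpos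

end Counting

theorem stmt6_general {R R' V V' : Type*} [Fintype R] [Fintype R'] [Fintype V]
    [DecidableEq R] [DecidableEq R'] [DecidableEq V] [DecidableEq V']
    (Δ : (R → V) → (R → V')) (τ' : R' → V') (k : ℕ)
    (hreach : ∃ (τ : R → V) (π : R ≃ R'), Δ τ = τ' ∘ π) :
    (∀ r' : R', k ≤ (Finset.univ.filter (fun s' : R' => τ' s' = τ' r')).card)
    ↔ (∀ fT : (R → V) → ℝ, (∀ τ, 0 ≤ fT τ) → ∑ τ, fT τ = 1 →
        ∀ (r : R) (r' : R'),
          (k : ℝ) *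
            (∑ τ : R → V, fT τ *
              ((Finset.univ.filter
                  (fun π : R ≃ R' => π r = r' ∧ Δ τ = τ' ∘ π)).card : ℝ))
          ≤ ∑ τ : R → V, fT τ *
              ((Finset.univ.filter (fun π : R ≃ R' => Δ τ = τ' ∘ π)).card : ℝ)) := by
  constructor
  · intro hanon fT hfT _ r r'
    rw [mul_sum]
    refine sum_le_sum fun τ _ => ?_
    rw [mul_left_comm]
    exact mul_le_mul_of_nonneg_left
      (by exact_mod_cast mul_card_filter_apply_eq_le (Δ τ) τ' k hanon r r') (hfT τ)
  · intro hP r'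
    obtain ⟨τ₀, π₀, hπ₀⟩ := hreach
    have h := hP (fun τ => if τ = τ₀ then 1 else 0) (fun τ => by split_ifs <;> norm_num)
      (by simp) (π₀.symm r') r'
    simp only [ite_mul, one_mul, zero_mul, sum_ite_eq', mem_univ, if_true] at h
    exact le_card_of_mul_card_filter_apply_eq_le (Δ τ₀) τ' k π₀ hπ₀ r'
      (by exact_mod_cast h)

/-- Theorem 1: for a deterministic privacy mechanism `Δ` with
`|R| = |R'|` and a reachable released table `τ'`, k-anonymity of `τ'` is equivalent
to Pk-anonymity of `(Δ, τ')` (stated as: for every distribution `fT` on private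
tables and all `r, r'`, `k · P[Π(r) = r' ∧ T' = τ'] ≤ P[T' = τ']`). -/
theorem stmt6 {R R' V V' : Type*} [Fintype R] [Fintype R'] [Fintype V] [Fintype V']
    [DecidableEq R] [DecidableEq R'] [DecidableEq V] [DecidableEq V']
    (hcard : Fintype.card R = Fintype.card R')
    (Δ : (R → V) → (R → V')) (τ' : R' → V') (k : ℕ) (hk : 0 < k)
    (hreach : ∃ (τ : R → V) (π : R ≃ R'), Δ τ = τ' ∘ π) :
    (∀ r' : R', k ≤ (Finset.univ.filter (fun s' : R' => τ' s' = τ' r')).card)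
    ↔ (∀ fT : (R → V) → ℝ, (∀ τ, 0 ≤ fT τ) → ∑ τ, fT τ = 1 →
        ∀ (r : R) (r' : R'),
          (k : ℝ) *
            (∑ τ : R → V, fT τ *
              ((Finset.univ.filter
                  (fun π : R ≃ R' => π r = r' ∧ Δ τ = τ' ∘ π)).card : ℝ))
          ≤ ∑ τ : R → V, fT τ *
              ((Finset.univ.filter (fun π : R ≃ R' => Δ τ = τ' ∘ π)).card : ℝ)) :=
  stmt6_general Δ τ' k hreach
end

section
/- Let A be a row-stochastic matrix with strictly positive entries indexed by V × V' (the transition probability matrix of a PRAM mechanism). For two private tables τ₁, τ₂ : R → V differing in exactly one record r, and any released table τ' : R → V', the ratio P[Δ(τ₁) ∘ Π⁻¹ = τ'] / P[Δ(τ₂) ∘ Π⁻¹ = τ'] is at most max_{u,v ∈ V, v' ∈ V'} A_{u,v'} / A_{v,v'}, where Δ applies transition A independently to each record and Π is a uniformly random permutation. Consequently, PRAM gives ε-differential privacy with ε = ln max_{u,v ∈ V, v' ∈ V'} A_{u,v'}/A_{v,v'}. -/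
/-!
Changing one record changes only one factor of the likelihood of each fixed matching of released
and private records: in `∏ s, A (τ s) (τ' (π s))` the factor at `r` goes from `A (τ₂ r) v'` to
`A (τ₁ r) v'`, which is at most `C` times larger, and all other factors agree. Summing over the
matchings `π` preserves the bound, and since `C > 0` it is `exp (log C)`.
-/

open Finset

/-- `P[Δ(τ) ∘ Π⁻¹ = τ']`: the average over the uniform shuffle `Π = π` of the probability that
the randomized table `Δ(τ)` equals `τ' ∘ π`. -/
noncomputable def pramProb {R V V' : Type*} [Fintype R] [DecidableEq R]
    (A : V → V' → ℝ) (τ : R → V) (τ' : R → V') : ℝ :=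
  (∑ π : Equiv.Perm R, ∏ s, A (τ s) (τ' (π s))) / (Fintype.card R).factorial

theorem le_ciSup₃_of_finite {α β γ δ : Type*} [Finite α] [Finite β] [Finite γ]
    [ConditionallyCompleteLattice δ] (f : α → β → γ → δ) (a : α) (b : β) (c : γ) :
    f a b c ≤ ⨆ a, ⨆ b, ⨆ c, f a b c :=
  calc f a b c ≤ ⨆ c, f a b c := le_ciSup (Finite.bddAbove_range _) c
    _ ≤ ⨆ b, ⨆ c, f a b c := le_ciSup (Finite.bddAbove_range (fun b ↦ ⨆ c, f a b c)) b
    _ ≤ ⨆ a, ⨆ b, ⨆ c, f a b c :=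
      le_ciSup (Finite.bddAbove_range (fun a ↦ ⨆ b, ⨆ c, f a b c)) a

theorem prod_le_mul_prod_of_forall_ne_eq {ι α : Type*} [Fintype ι] [CommSemiring α]
    [PartialOrder α] [IsOrderedRing α] {f g : ι → α} {c : α} (r : ι) (hg : ∀ i, 0 ≤ g i)
    (hr : f r ≤ c * g r) (hf : ∀ i, i ≠ r → f i = g i) :
    ∏ i, f i ≤ c * ∏ i, g i := by
  classical
  have hrest : ∏ i ∈ univ.erase r, f i = ∏ i ∈ univ.erase r, g i :=
    prod_congr rfl fun i hi ↦ hf i (ne_of_mem_erase hi)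
  calc ∏ i, f i = f r * ∏ i ∈ univ.erase r, g i := by
        rw [← mul_prod_erase univ f (mem_univ r), hrest]
    _ ≤ c * g r * ∏ i ∈ univ.erase r, g i :=
        mul_le_mul_of_nonneg_right hr (prod_nonneg fun i _ ↦ hg i)
    _ = c * ∏ i, g i := by rw [mul_assoc, mul_prod_erase univ g (mem_univ r)]

theorem pramProb_le_mul_pramProb {R V V' : Type*} [Fintype R] [DecidableEq R]
    {A : V → V' → ℝ} {τ₁ τ₂ : R → V} {C : ℝ} (hA : ∀ u v', 0 ≤ A u v') (r : R)
    (hr : ∀ v', A (τ₁ r) v' ≤ C * A (τ₂ r) v') (hdiff : ∀ s, s ≠ r → τ₁ s = τ₂ s)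
    (τ' : R → V') :
    pramProb A τ₁ τ' ≤ C * pramProb A τ₂ τ' := by
  have hsum : ∑ π : Equiv.Perm R, ∏ s, A (τ₁ s) (τ' (π s))
      ≤ C * ∑ π : Equiv.Perm R, ∏ s, A (τ₂ s) (τ' (π s)) := by
    rw [mul_sum]
    exact sum_le_sum fun π _ ↦ prod_le_mul_prod_of_forall_ne_eq r (fun s ↦ hA _ _) (hr _)
      fun s hs ↦ by rw [hdiff s hs]
  rw [pramProb, pramProb, mul_div_assoc']
  gcongr

theorem stmt8_general {R V V' : Type*} [Fintype R] [DecidableEq R]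
    [Fintype V] [Fintype V']
    (A : V → V' → ℝ) (hA : ∀ u v', 0 < A u v')
    (τ₁ τ₂ : R → V) (r : R) (hdiff : ∀ s, s ≠ r → τ₁ s = τ₂ s)
    (τ' : R → V') :
    (∑ π : Equiv.Perm R, ∏ s, A (τ₁ s) (τ' (π s))) / (Nat.factorial (Fintype.card R))
      ≤ (⨆ u : V, ⨆ v : V, ⨆ v' : V', A u v' / A v v') *
        ((∑ π : Equiv.Perm R, ∏ s, A (τ₂ s) (τ' (π s))) /
          (Nat.factorial (Fintype.card R))) ∧
    (∑ π : Equiv.Perm R, ∏ s, A (τ₁ s) (τ' (π s))) / (Nat.factorial (Fintype.card R))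
      ≤ Real.exp (Real.log (⨆ u : V, ⨆ v : V, ⨆ v' : V', A u v' / A v v')) *
        ((∑ π : Equiv.Perm R, ∏ s, A (τ₂ s) (τ' (π s))) /
          (Nat.factorial (Fintype.card R))) := by
  set C := ⨆ u : V, ⨆ v : V, ⨆ v' : V', A u v' / A v v'
  have hratio : ∀ u v v', A u v' / A v v' ≤ C := le_ciSup₃_of_finite _
  have hbound : pramProb A τ₁ τ' ≤ C * pramProb A τ₂ τ' :=
    pramProb_le_mul_pramProb (fun u v' ↦ (hA u v').le) r
      (fun v' ↦ (div_le_iff₀ (hA _ _)).1 (hratio _ _ _)) hdiff τ'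
  have hC : 0 < C := (div_pos (hA (τ₁ r) (τ' r)) (hA (τ₁ r) (τ' r))).trans_le (hratio _ _ _)
  exact ⟨hbound, by rwa [Real.exp_log hC]⟩

/-- for a strictly positive row-stochastic PRAM matrix `A` and private
tables `τ₁, τ₂` differing in exactly one record `r`, the probability of each released
table `τ'` satisfies `P[τ₁ ↦ τ'] ≤ C · P[τ₂ ↦ τ']` with
`C = max_{u,v,v'} A u v' / A v v'`; hence PRAM gives ε-DP with `ε = ln C`. -/
theorem stmt8 {R V V' : Type*} [Fintype R] [DecidableEq R]
    [Fintype V] [Nonempty V] [Fintype V'] [Nonempty V']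
    (A : V → V' → ℝ) (hA : ∀ u v', 0 < A u v') (hrow : ∀ u, ∑ v', A u v' = 1)
    (τ₁ τ₂ : R → V) (r : R) (hr : τ₁ r ≠ τ₂ r) (hdiff : ∀ s, s ≠ r → τ₁ s = τ₂ s)
    (τ' : R → V') :
    (∑ π : Equiv.Perm R, ∏ s, A (τ₁ s) (τ' (π s))) / (Nat.factorial (Fintype.card R))
      ≤ (⨆ u : V, ⨆ v : V, ⨆ v' : V', A u v' / A v v') *
        ((∑ π : Equiv.Perm R, ∏ s, A (τ₂ s) (τ' (π s))) /
          (Nat.factorial (Fintype.card R))) ∧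
    (∑ π : Equiv.Perm R, ∏ s, A (τ₁ s) (τ' (π s))) / (Nat.factorial (Fintype.card R))
      ≤ Real.exp (Real.log (⨆ u : V, ⨆ v : V, ⨆ v' : V', A u v' / A v v')) *
        ((∑ π : Equiv.Perm R, ∏ s, A (τ₂ s) (τ' (π s))) /
          (Nat.factorial (Fintype.card R))) :=
  stmt8_general A hA τ₁ τ₂ r hdiff τ'
end

section
/- Let A be a strictly positive row-stochastic matrix on V × V' (|V|, |V'| ≥ 2) and |R| = n ≥ 1. A PRAM mechanism with transition matrix A (applied independently per record, followed by a uniformly random permutation) is a Pk-anonymization if and only if k ≤ 1 + (n − 1) · min_{u,v ∈ V, u',v' ∈ V'} (A_{u,v'} A_{v,u'})/(A_{u,u'} A_{v,v'}). In particular, the supremum over private-table distributions, records r, r', and released tables τ' of P[Π(r) = r' | T' = τ'] equals 1 / (1 + (n − 1) min_{u,v,u',v'} (A_{u,v'} A_{v,u'})/(A_{u,u'} A_{v,v'})). -/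
/-!
Fix the private table `τ` and the released table `τ'`, and write `w s t = A (τ s) (τ' t)`.
Up to the factor `n!`, the joint weight of `Π(r) = r'` and `T' = τ'` is the sum of
`∏ s, w s (σ s)` over the permutations with `σ r = r'`. Composing with the transposition of `r'` and `r''` maps this fiber
onto the fiber of `r''`, and changes the weight of each permutation by a factor of the form
`(A u v' * A v u') / (A u u' * A v v')`, hence by at least the minimum `m` of these ratios.
So every other fiber weighs at least `m` times the fiber of `r'`, and the total is at least
`1 + (n - 1) m` times it. Equality holds when `τ` and `τ'` take the values `u, u'` at `r = r'`
and `v, v'` elsewhere, for a minimising quadruple.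
-/

open Finset Equiv

section ConditionallyComplete

variable {α ι₁ ι₂ ι₃ ι₄ : Type*} [ConditionallyCompleteLinearOrder α]
  [Finite ι₁] [Finite ι₂] [Finite ι₃] [Finite ι₄]

theorem ciInf₄_le (f : ι₁ → ι₂ → ι₃ → ι₄ → α) (a : ι₁) (b : ι₂) (c : ι₃) (d : ι₄) :
    ⨅ a, ⨅ b, ⨅ c, ⨅ d, f a b c d ≤ f a b c d :=
  (ciInf_le (Set.finite_range _).bddBelow a).trans <|
    (ciInf_le (Set.finite_range _).bddBelow b).trans <|
      (ciInf_le (Set.finite_range _).bddBelow c).trans <|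
        ciInf_le (Set.finite_range _).bddBelow d

theorem exists_eq_ciInf₄ [Nonempty ι₁] [Nonempty ι₂] [Nonempty ι₃] [Nonempty ι₄]
    (f : ι₁ → ι₂ → ι₃ → ι₄ → α) :
    ∃ a b c d, f a b c d = ⨅ a, ⨅ b, ⨅ c, ⨅ d, f a b c d := by
  obtain ⟨a, ha⟩ := exists_eq_ciInf_of_finite (f := fun a => ⨅ b, ⨅ c, ⨅ d, f a b c d)
  obtain ⟨b, hb⟩ := exists_eq_ciInf_of_finite (f := fun b => ⨅ c, ⨅ d, f a b c d)
  obtain ⟨c, hc⟩ := exists_eq_ciInf_of_finite (f := fun c => ⨅ d, f a b c d)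
  obtain ⟨d, hd⟩ := exists_eq_ciInf_of_finite (f := fun d => f a b c d)
  exact ⟨a, b, c, d, by rw [hd, hc, hb, ha]⟩

end ConditionallyComplete

section Fibers

variable {ι : Type*} [Fintype ι] [DecidableEq ι]

theorem cast_card_univ_erase {K : Type*} [AddGroupWithOne K] (j : ι) :
    ((univ.erase j).card : K) = Fintype.card ι - 1 := by
  rw [card_erase_of_mem (mem_univ j), card_univ, Nat.cast_pred (Fintype.card_pos_iff.2 ⟨j⟩)]

theorem prod_swap_mul {M : Type*} [CommMonoid M] (G : ι → ι → M) (x y : ι) :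
    (∏ t, G t (swap x y t)) * (G x x * G y y) = (∏ t, G t t) * (G x y * G y x) := by
  rcases eq_or_ne x y with rfl | hxy
  · simp
  have hrest : ∏ t ∈ {x, y}ᶜ, G t (swap x y t) = ∏ t ∈ {x, y}ᶜ, G t t :=
    prod_congr rfl fun t ht => by
      simp only [mem_compl, mem_insert, mem_singleton, not_or] at ht
      rw [swap_apply_of_ne_of_ne ht.1 ht.2]
  rw [← prod_mul_prod_compl {x, y}, ← prod_mul_prod_compl {x, y} (fun t => G t t), hrest,
    prod_pair hxy, prod_pair hxy, swap_apply_left, swap_apply_right]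
  ac_rfl

theorem prod_swap_comp_mul {M : Type*} [CommMonoid M] (w : ι → ι → M) (σ : Perm ι) (x y : ι) :
    (∏ k, w k (swap x y (σ k))) * (w (σ.symm x) x * w (σ.symm y) y) =
      (∏ k, w k (σ k)) * (w (σ.symm x) y * w (σ.symm y) x) := by
  have hswap := Equiv.prod_comp σ fun t => w (σ.symm t) (swap x y t)
  have hid := Equiv.prod_comp σ fun t => w (σ.symm t) t
  simp only [symm_apply_apply] at hswap hid
  rw [hswap, hid]
  exact prod_swap_mul (fun t => w (σ.symm t)) x y

def fiberWeight {M : Type*} [CommSemiring M] (w : ι → ι → M) (i j : ι) : M :=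
  ∑ σ ∈ univ.filter (fun σ : Perm ι => σ i = j), ∏ k, w k (σ k)

variable {M : Type*} [CommSemiring M] (w : ι → ι → M)

theorem sum_fiberWeight (i : ι) : ∑ j, fiberWeight w i j = ∑ σ : Perm ι, ∏ k, w k (σ k) :=
  sum_fiberwise _ _ _

theorem fiberWeight_add_sum_erase (i j : ι) :
    fiberWeight w i j + ∑ j' ∈ univ.erase j, fiberWeight w i j' =
      ∑ σ : Perm ι, ∏ k, w k (σ k) := by
  rw [add_sum_erase _ _ (mem_univ j), sum_fiberWeight]

theorem fiberWeight_eq_sum_swap (i j j' : ι) :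
    fiberWeight w i j' =
      ∑ σ ∈ univ.filter (fun σ : Perm ι => σ i = j), ∏ k, w k (swap j j' (σ k)) := by
  refine (sum_equiv (Equiv.mulLeft (swap j j')) (fun σ => ?_) fun σ _ => rfl).symm
  simp [swap_apply_eq_iff]

end Fibers

section Ordered

variable {ι 𝕜 : Type*} [Fintype ι] [DecidableEq ι]
  [CommRing 𝕜] [LinearOrder 𝕜] [IsStrictOrderedRing 𝕜] {w : ι → ι → 𝕜} {m : 𝕜}

theorem fiberWeight_pos (hw : ∀ a b, 0 < w a b) (i j : ι) : 0 < fiberWeight w i j :=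
  sum_pos (fun σ _ => prod_pos fun k _ => hw _ _) ⟨swap i j, by simp⟩

theorem mul_fiberWeight_le (hw : ∀ a b, 0 < w a b)
    (hm : ∀ a b x y, m * (w a x * w b y) ≤ w a y * w b x) (i j j' : ι) :
    m * fiberWeight w i j ≤ fiberWeight w i j' := by
  rw [fiberWeight_eq_sum_swap w i j j', fiberWeight, mul_sum]
  refine sum_le_sum fun σ _ =>
    le_of_mul_le_mul_right ?_ (mul_pos (hw (σ.symm j) j) (hw (σ.symm j') j'))
  calc (m * ∏ k, w k (σ k)) * (w (σ.symm j) j * w (σ.symm j') j')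
      = (∏ k, w k (σ k)) * (m * (w (σ.symm j) j * w (σ.symm j') j')) := by ring
    _ ≤ (∏ k, w k (σ k)) * (w (σ.symm j) j' * w (σ.symm j') j) :=
        mul_le_mul_of_nonneg_left (hm _ _ _ _) (prod_pos fun k _ => hw _ _).le
    _ = _ := (prod_swap_comp_mul w σ j j').symm

theorem fiberWeight_eq_mul (hw : ∀ a b, 0 < w a b) {i j : ι}
    (hm : ∀ b ≠ i, ∀ y ≠ j, m * (w i j * w b y) = w i y * w b j) {j' : ι} (hj' : j' ≠ j) :
    fiberWeight w i j' = m * fiberWeight w i j := by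
  rw [fiberWeight_eq_sum_swap w i j j', fiberWeight, mul_sum]
  refine sum_congr rfl fun σ hσ => ?_
  have hσi : σ i = j := (mem_filter.1 hσ).2
  have hσj : σ.symm j = i := σ.symm_apply_eq.2 hσi.symm
  have hσj' : σ.symm j' ≠ i := fun h => hj' (by rw [← hσi, ← h, σ.apply_symm_apply])
  refine mul_right_cancel₀ (mul_pos (hw (σ.symm j) j) (hw (σ.symm j') j')).ne' ?_
  rw [prod_swap_comp_mul, hσj, ← hm _ hσj' _ hj']
  ring

theorem one_add_mul_fiberWeight_le (hw : ∀ a b, 0 < w a b)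
    (hm : ∀ a b x y, m * (w a x * w b y) ≤ w a y * w b x) (i j : ι) :
    (1 + (Fintype.card ι - 1) * m) * fiberWeight w i j ≤ ∑ σ : Perm ι, ∏ k, w k (σ k) := by
  calc (1 + (Fintype.card ι - 1) * m) * fiberWeight w i j
      = fiberWeight w i j + ∑ _j' ∈ univ.erase j, m * fiberWeight w i j := by
        rw [sum_const, nsmul_eq_mul, cast_card_univ_erase]
        ring
    _ ≤ fiberWeight w i j + ∑ j' ∈ univ.erase j, fiberWeight w i j' := by
        gcongr with j'
        exact mul_fiberWeight_le hw hm i j j'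
    _ = _ := fiberWeight_add_sum_erase w i j

theorem one_add_mul_fiberWeight_eq (hw : ∀ a b, 0 < w a b) {i j : ι}
    (hm : ∀ b ≠ i, ∀ y ≠ j, m * (w i j * w b y) = w i y * w b j) :
    (1 + (Fintype.card ι - 1) * m) * fiberWeight w i j = ∑ σ : Perm ι, ∏ k, w k (σ k) := by
  rw [← fiberWeight_add_sum_erase w i j,
    sum_congr rfl fun j' hj' => fiberWeight_eq_mul hw hm (ne_of_mem_erase hj'),
    sum_const, nsmul_eq_mul, cast_card_univ_erase]
  ring

end Ordered

section Pram

variable {R V V' : Type*} [Fintype V] [Fintype V'] {A : V → V' → ℝ}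

noncomputable def minOddsRatio (A : V → V' → ℝ) : ℝ :=
  ⨅ u : V, ⨅ v : V, ⨅ u' : V', ⨅ v' : V', (A u v' * A v u') / (A u u' * A v v')

theorem minOddsRatio_mul_le (hA : ∀ u v', 0 < A u v') (u v : V) (u' v' : V') :
    minOddsRatio A * (A u u' * A v v') ≤ A u v' * A v u' := by
  rw [← le_div_iff₀ (mul_pos (hA _ _) (hA _ _))]
  exact ciInf₄_le _ _ _ _ _

theorem exists_minOddsRatio_mul_eq [Nonempty V] [Nonempty V'] (hA : ∀ u v', 0 < A u v') :
    ∃ u v u' v', minOddsRatio A * (A u u' * A v v') = A u v' * A v u' := by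
  obtain ⟨u, v, u', v', h⟩ :=
    exists_eq_ciInf₄ fun u v u' v' => (A u v' * A v u') / (A u u' * A v v')
  rw [div_eq_iff (mul_pos (hA _ _) (hA _ _)).ne'] at h
  exact ⟨u, v, u', v', h.symm⟩

variable [Fintype R] [DecidableEq R]

theorem one_add_minOddsRatio_mul_fiberWeight_le (hA : ∀ u v', 0 < A u v') (τ : R → V)
    (τ' : R → V') (r r' : R) :
    (1 + (Fintype.card R - 1) * minOddsRatio A) * fiberWeight (fun s t => A (τ s) (τ' t)) r r' ≤
      ∑ σ : Perm R, ∏ s, A (τ s) (τ' (σ s)) :=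
  one_add_mul_fiberWeight_le (w := fun s t => A (τ s) (τ' t)) (fun _ _ => hA _ _)
    (fun _ _ _ _ => minOddsRatio_mul_le hA _ _ _ _) r r'

theorem exists_one_add_minOddsRatio_mul_fiberWeight_eq [Nonempty V] [Nonempty V']
    (hA : ∀ u v', 0 < A u v') (r : R) :
    ∃ (τ : R → V) (τ' : R → V'),
      (1 + (Fintype.card R - 1) * minOddsRatio A) * fiberWeight (fun s t => A (τ s) (τ' t)) r r =
        ∑ σ : Perm R, ∏ s, A (τ s) (τ' (σ s)) := by
  obtain ⟨u, v, u', v', h⟩ := exists_minOddsRatio_mul_eq hA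
  refine ⟨fun s => if s = r then u else v, fun s => if s = r then u' else v',
    one_add_mul_fiberWeight_eq (fun _ _ => hA _ _) fun b hb y hy => ?_⟩
  simpa [hb, hy] using h

end Pram

theorem stmt12_general {R V V' : Type*} [Fintype R] [DecidableEq R] [Nonempty R]
    [Fintype V] [Fintype V']
    (h2V : 2 ≤ Fintype.card V) (h2V' : 2 ≤ Fintype.card V')
    (A : V → V' → ℝ) (hA : ∀ u v', 0 < A u v')
    (k : ℝ) :
    (∀ fT : (R → V) → ℝ, (∀ τ, 0 ≤ fT τ) → ∑ τ, fT τ = 1 →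
      ∀ (τ' : R → V') (r r' : R),
        k * (∑ τ : R → V, fT τ *
              ∑ π ∈ Finset.univ.filter (fun π : Equiv.Perm R => π r = r'),
                ∏ s, A (τ s) (τ' (π s)))
          ≤ ∑ τ : R → V, fT τ * ∑ π : Equiv.Perm R, ∏ s, A (τ s) (τ' (π s)))
    ↔ k ≤ 1 + ((Fintype.card R : ℝ) - 1) *
        ⨅ u : V, ⨅ v : V, ⨅ u' : V', ⨅ v' : V',
          (A u v' * A v u') / (A u u' * A v v') := by
  classical
  have : Nonempty V := Fintype.card_pos_iff.mp (by omega)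
  have : Nonempty V' := Fintype.card_pos_iff.mp (by omega)
  constructor
  · intro H
    obtain ⟨r⟩ := ‹Nonempty R›
    obtain ⟨τ, τ', htotal⟩ := exists_one_add_minOddsRatio_mul_fiberWeight_eq hA r
    have key := H (Pi.single τ 1) (fun _ => by rw [Pi.single_apply]; positivity) (by simp) τ' r r
    simp only [Pi.single_apply, ite_mul, one_mul, zero_mul, sum_ite_eq', mem_univ, if_true] at key
    exact le_of_mul_le_mul_right (key.trans_eq htotal.symm) (fiberWeight_pos (fun _ _ => hA _ _) r r)
  · intro hk fT hfT _ τ' r r'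
    rw [mul_sum]
    refine sum_le_sum fun τ _ => ?_
    rw [mul_left_comm]
    refine mul_le_mul_of_nonneg_left ?_ (hfT τ)
    calc k * fiberWeight (fun s t => A (τ s) (τ' t)) r r'
        ≤ (1 + (Fintype.card R - 1) * minOddsRatio A) * fiberWeight _ r r' :=
          mul_le_mul_of_nonneg_right hk (fiberWeight_pos (fun _ _ => hA _ _) r r').le
      _ ≤ _ := one_add_minOddsRatio_mul_fiberWeight_le hA τ τ' r r'

/-- Theorem 2: a PRAM mechanism with strictly positive row-stochastic
matrix `A` on an `n`-record table is a Pk-anonymization if and only if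
`k ≤ 1 + (n-1) · min_{u,v,u',v'} (A u v' · A v u')/(A u u' · A v v')`.
Pk-anonymity is stated as: for every distribution `fT` on private tables, every
released table `τ'` and all records `r, r'`,
`k · P[Π(r) = r' ∧ T' = τ'] ≤ P[T' = τ']`. -/
theorem stmt12 {R V V' : Type*} [Fintype R] [DecidableEq R] [Nonempty R]
    [Fintype V] [DecidableEq V] [Fintype V'] [DecidableEq V']
    (h2V : 2 ≤ Fintype.card V) (h2V' : 2 ≤ Fintype.card V')
    (A : V → V' → ℝ) (hA : ∀ u v', 0 < A u v') (hrow : ∀ u, ∑ v', A u v' = 1)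
    (k : ℝ) :
    (∀ fT : (R → V) → ℝ, (∀ τ, 0 ≤ fT τ) → ∑ τ, fT τ = 1 →
      ∀ (τ' : R → V') (r r' : R),
        k * (∑ τ : R → V, fT τ *
              ∑ π ∈ Finset.univ.filter (fun π : Equiv.Perm R => π r = r'),
                ∏ s, A (τ s) (τ' (π s)))
          ≤ ∑ τ : R → V, fT τ * ∑ π : Equiv.Perm R, ∏ s, A (τ s) (τ' (π s)))
    ↔ k ≤ 1 + ((Fintype.card R : ℝ) - 1) *
        ⨅ u : V, ⨅ v : V, ⨅ u' : V', ⨅ v' : V',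
          (A u v' * A v u') / (A u u' * A v v') :=
  stmt12_general h2V h2V' A hA k
end

section
/- Let A be a strictly positive matrix indexed by R × R' with |R| = |R'| = n ≥ 2, and fix r ∈ R, r' ∈ R'. Define F(A) = (Σ_{π bijection, π(r) = r'} ∏_{s ∈ R} A_{s,π(s)}) / (Σ_{π bijection} ∏_{s ∈ R} A_{s,π(s)}). Then 1/F(A) = 1 + (Σ_{π: π(r) = r'} Σ_{t ≠ r} (A_{t,r'} A_{r,π(t)} / A_{t,π(t)}) ∏_{s ≠ r} A_{s,π(s)}) / (Σ_{π: π(r) = r'} A_{r,r'} ∏_{s ≠ r} A_{s,π(s)}). -/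
/-!
Split the permanent `∑_σ ∏_s A s (σ s)` according to whether `σ r = r'`. A bijection with
`σ r ≠ r'` is written uniquely as `π ∘ (r t)` with `π r = r'` and `t = σ⁻¹ r' ≠ r`, and the
transposition changes the weight `∏_s A s (π s)` only in the rows `r` and `t`, i.e. by the factor
`A t r' · A r (π t) / (A r r' · A t (π t))`. Dividing the permanent by the part with `σ r = r'`
gives the identity.
-/

open Finset

namespace Equiv

variable {R R' : Type*} [Fintype R] [DecidableEq R]

theorem prod_apply_swap_mul {M : Type*} [CommMonoid M] (A : R → R' → M) (g : R → R')
    {r t : R} (h : r ≠ t) :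
    (∏ s, A s (g (swap r t s))) * (A r (g r) * A t (g t)) =
      (∏ s, A s (g s)) * (A r (g t) * A t (g r)) := by
  have hcompl : ∏ s ∈ ({r, t} : Finset R)ᶜ, A s (g (swap r t s)) =
      ∏ s ∈ ({r, t} : Finset R)ᶜ, A s (g s) := by
    refine prod_congr rfl fun s hs => ?_
    simp only [mem_compl, mem_insert, mem_singleton, not_or] at hs
    rw [swap_apply_of_ne_of_ne hs.1 hs.2]
  rw [← prod_mul_prod_compl {r, t}, ← prod_mul_prod_compl {r, t} (fun s => A s (g s)),
    prod_pair h, prod_pair h, hcompl, swap_apply_left, swap_apply_right]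
  ac_rfl

theorem prod_apply_swap_trans {K : Type*} [Field K] (A : R → R' → K) {π : R ≃ R'}
    {r t : R} {r' : R'} (hπ : π r = r') (ht : t ≠ r) (hr : A r r' ≠ 0) (hπt : A t (π t) ≠ 0) :
    ∏ s, A s ((swap r t).trans π s) =
      A t r' * A r (π t) / A t (π t) * ∏ s ∈ univ.erase r, A s (π s) := by
  have key := prod_apply_swap_mul A π ht.symm
  rw [← mul_prod_erase _ (fun s => A s (π s)) (mem_univ r), hπ] at key
  simp only [trans_apply]
  rw [div_mul_eq_mul_div, eq_div_iff hπt]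
  apply mul_left_cancel₀ hr
  linear_combination key

theorem sum_filter_apply_ne_eq_sum_swap_trans [Fintype R'] [DecidableEq R']
    {M : Type*} [AddCommMonoid M] (f : (R ≃ R') → M) (r : R) (r' : R') :
    ∑ σ ∈ univ.filter (fun σ : R ≃ R' => σ r ≠ r'), f σ =
      ∑ π ∈ univ.filter (fun π : R ≃ R' => π r = r'),
        ∑ t ∈ univ.erase r, f ((swap r t).trans π) := by
  symm
  rw [sum_sigma']
  refine sum_nbij' (fun x => (swap r x.2).trans x.1)
    (fun σ => ⟨(swap r (σ.symm r')).trans σ, σ.symm r'⟩) ?_ ?_ ?_ ?_ fun _ _ => rfl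
  · rintro ⟨π, t⟩ hx
    simp only [mem_sigma, mem_filter, mem_univ, true_and, mem_erase] at hx
    simp only [mem_filter, mem_univ, true_and, trans_apply, swap_apply_left, ← hx.1]
    exact fun h => hx.2.1 (π.injective h)
  · intro σ hσ
    simp only [mem_filter, mem_univ, true_and] at hσ
    simp only [mem_sigma, mem_filter, mem_univ, true_and, mem_erase, trans_apply,
      swap_apply_left, apply_symm_apply, and_true]
    exact fun h => hσ (h ▸ σ.apply_symm_apply r')
  · rintro ⟨π, t⟩ hx
    simp only [mem_sigma, mem_filter, mem_univ, true_and] at hx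
    have ht : ((swap r t).trans π).symm r' = t := by
      rw [symm_apply_eq, trans_apply, swap_apply_right, hx.1]
    simp only [ht, Sigma.mk.injEq, heq_eq_eq, and_true]
    ext s
    simp [swap_apply_self]
  · intro σ _
    ext s
    simp [swap_apply_self]

end Equiv

theorem stmt13_general {R R' : Type*} [Fintype R] [Fintype R'] [DecidableEq R] [DecidableEq R']
    (hcard : Fintype.card R = Fintype.card R')
    (A : R → R' → ℝ) (hA : ∀ s s', 0 < A s s') (r : R) (r' : R') :
    1 / ((∑ π ∈ Finset.univ.filter (fun π : R ≃ R' => π r = r'), ∏ s, A s (π s)) /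
          (∑ π : R ≃ R', ∏ s, A s (π s)))
      = 1 +
        (∑ π ∈ Finset.univ.filter (fun π : R ≃ R' => π r = r'),
            (∑ t ∈ Finset.univ.erase r, A t r' * A r (π t) / A t (π t)) *
              ∏ s ∈ Finset.univ.erase r, A s (π s)) /
        (∑ π ∈ Finset.univ.filter (fun π : R ≃ R' => π r = r'),
            A r r' * ∏ s ∈ Finset.univ.erase r, A s (π s)) := by
  obtain ⟨e⟩ := Fintype.card_eq.mp hcard
  have hfixed : ∀ π : R ≃ R', π r = r' →
      A r r' * ∏ s ∈ univ.erase r, A s (π s) = ∏ s, A s (π s) := fun π hπ => by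
    rw [← hπ, mul_prod_erase _ (fun s => A s (π s)) (mem_univ r)]
  have hN : 0 < ∑ π ∈ univ.filter (fun π : R ≃ R' => π r = r'), ∏ s, A s (π s) :=
    sum_pos (fun π _ => prod_pos fun s _ => hA _ _)
      ⟨e.trans (Equiv.swap (e r) r'), by simp⟩
  rw [one_div_div, sum_congr rfl fun π hπ => hfixed π (mem_filter.mp hπ).2,
    ← sum_filter_add_sum_filter_not univ (fun π : R ≃ R' => π r = r'), add_div,
    div_self hN.ne', Equiv.sum_filter_apply_ne_eq_sum_swap_trans]
  congr 2
  refine sum_congr rfl fun π hπ => ?_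
  rw [sum_mul]
  exact sum_congr rfl fun t ht => Equiv.prod_apply_swap_trans A (mem_filter.mp hπ).2
    (ne_of_mem_erase ht) (hA r r').ne' (hA t (π t)).ne'

/-- exact permanent-ratio decomposition. For strictly positive `A`
indexed by `R × R'` with `|R| = |R'| = n ≥ 2` and fixed `r, r'`, with
`F(A) = (Σ_{π(r)=r'} ∏_s A s (π s)) / (Σ_π ∏_s A s (π s))`, we have
`1/F(A) = 1 + (Σ_{π(r)=r'} (Σ_{t≠r} A t r' · A r (π t) / A t (π t)) ∏_{s≠r} A s (π s))
/ (Σ_{π(r)=r'} A r r' · ∏_{s≠r} A s (π s))`. -/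
theorem stmt13 {R R' : Type*} [Fintype R] [Fintype R'] [DecidableEq R] [DecidableEq R']
    (hcard : Fintype.card R = Fintype.card R') (h2 : 2 ≤ Fintype.card R)
    (A : R → R' → ℝ) (hA : ∀ s s', 0 < A s s') (r : R) (r' : R') :
    1 / ((∑ π ∈ Finset.univ.filter (fun π : R ≃ R' => π r = r'), ∏ s, A s (π s)) /
          (∑ π : R ≃ R', ∏ s, A s (π s)))
      = 1 +
        (∑ π ∈ Finset.univ.filter (fun π : R ≃ R' => π r = r'),
            (∑ t ∈ Finset.univ.erase r, A t r' * A r (π t) / A t (π t)) *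
              ∏ s ∈ Finset.univ.erase r, A s (π s)) /
        (∑ π ∈ Finset.univ.filter (fun π : R ≃ R' => π r = r'),
            A r r' * ∏ s ∈ Finset.univ.erase r, A s (π s)) :=
  stmt13_general hcard A hA r r'
end

section
/- Let A be a strictly positive transition matrix on V × V', let n ≥ 2, r ∈ R, r' ∈ R'. For a private table τ with τ(r) arbitrary and τ(s) = v for all s ≠ r, and released table τ' with τ'(r') arbitrary and τ'(s') = v' for all s' ≠ r', the quantity (1/A_{τ(r),τ'(r')}) Σ_{t ≠ r} (A_{τ(t),τ'(r')} A_{τ(r),τ'(π(t))} / A_{τ(t),τ'(π(t))}) equals (n−1) · (A_{v,τ'(r')} A_{τ(r),v'}) / (A_{τ(r),τ'(r')} A_{v,v'}) for any bijection π with π(r) = r', and this is minimized over all tables by choosing values achieving min_{u,v,u',v'} (A_{u,v'} A_{v,u'})/(A_{u,u'} A_{v,v'}). -/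
/-!
Off the distinguished rows every table entry is the constant `v` resp. `v'`, and since `π r = r'`
the bijection maps `t ≠ r` to `π t ≠ r'`. Hence all `n - 1` summands equal the single cross-ratio
`A(v, τ' r') A(τ r, v') / (A(τ r, τ' r') A(v, v'))`, which is one of the values over which the
minimum cross-ratio of `A` is taken.
-/

open Finset

theorem Finset.sum_erase_univ_eq_card_sub_one_mul {α : Type*} [Fintype α] [DecidableEq α]
    (f : α → ℝ) (r : α) (c : ℝ) (hf : ∀ t, t ≠ r → f t = c) :
    ∑ t ∈ univ.erase r, f t = ((Fintype.card α : ℝ) - 1) * c := by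
  rw [sum_congr rfl fun t ht => hf t (ne_of_mem_erase ht), sum_const,
    card_erase_of_mem (mem_univ r), card_univ, nsmul_eq_mul,
    Nat.cast_pred (Fintype.card_pos_iff.mpr ⟨r⟩)]

theorem iInf₄_le_of_finite {ι₁ ι₂ κ₁ κ₂ : Type*} [Finite ι₁] [Finite ι₂] [Finite κ₁]
    [Finite κ₂] (f : ι₁ → ι₂ → κ₁ → κ₂ → ℝ) (a : ι₁) (b : ι₂) (c : κ₁) (d : κ₂) :
    ⨅ i₁, ⨅ i₂, ⨅ j₁, ⨅ j₂, f i₁ i₂ j₁ j₂ ≤ f a b c d :=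
  (ciInf_le (Finite.bddBelow_range _) a).trans <| (ciInf_le (Finite.bddBelow_range _) b).trans <|
    (ciInf_le (Finite.bddBelow_range _) c).trans (ciInf_le (Finite.bddBelow_range _) d)

theorem sum_erase_crossRatio_of_constant_off {R R' V V' : Type*} [Fintype R] [DecidableEq R]
    (A : V → V' → ℝ) (r : R) (r' : R') (v : V) (v' : V')
    (τ : R → V) (hτ : ∀ s, s ≠ r → τ s = v)
    (τ' : R' → V') (hτ' : ∀ s', s' ≠ r' → τ' s' = v')
    (π : R ≃ R') (hπ : π r = r') :
    ∑ t ∈ univ.erase r, A (τ t) (τ' r') * A (τ r) (τ' (π t)) / A (τ t) (τ' (π t))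
      = ((Fintype.card R : ℝ) - 1) * (A v (τ' r') * A (τ r) v' / A v v') := by
  refine sum_erase_univ_eq_card_sub_one_mul _ r _ fun t ht => ?_
  have hπt : π t ≠ r' := hπ ▸ π.injective.ne ht
  rw [hτ t ht, hτ' (π t) hπt]

theorem stmt14_general {R R' V V' : Type*} [Fintype R] [DecidableEq R]
    [Fintype V] [Fintype V']
    (A : V → V' → ℝ)
    (r : R) (r' : R') (v : V) (v' : V')
    (τ : R → V) (hτ : ∀ s, s ≠ r → τ s = v)
    (τ' : R' → V') (hτ' : ∀ s', s' ≠ r' → τ' s' = v')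
    (π : R ≃ R') (hπ : π r = r') :
    (1 / A (τ r) (τ' r')) *
        (∑ t ∈ Finset.univ.erase r,
          A (τ t) (τ' r') * A (τ r) (τ' (π t)) / A (τ t) (τ' (π t)))
      = ((Fintype.card R : ℝ) - 1) *
          (A v (τ' r') * A (τ r) v') / (A (τ r) (τ' r') * A v v') ∧
    ((Fintype.card R : ℝ) - 1) *
        (⨅ u₁ : V, ⨅ u₂ : V, ⨅ w₁ : V', ⨅ w₂ : V',
          (A u₁ w₂ * A u₂ w₁) / (A u₁ w₁ * A u₂ w₂))
      ≤ (1 / A (τ r) (τ' r')) *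
          (∑ t ∈ Finset.univ.erase r,
            A (τ t) (τ' r') * A (τ r) (τ' (π t)) / A (τ t) (τ' (π t))) := by
  have heq : (1 / A (τ r) (τ' r')) *
      (∑ t ∈ univ.erase r, A (τ t) (τ' r') * A (τ r) (τ' (π t)) / A (τ t) (τ' (π t)))
      = ((Fintype.card R : ℝ) - 1) *
          (A v (τ' r') * A (τ r) v') / (A (τ r) (τ' r') * A v v') := by
    rw [sum_erase_crossRatio_of_constant_off A r r' v v' τ hτ τ' hτ' π hπ]
    ring
  have hn : (0 : ℝ) ≤ (Fintype.card R : ℝ) - 1 :=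
    sub_nonneg.mpr (Nat.one_le_cast.mpr (Fintype.card_pos_iff.mpr ⟨r⟩))
  refine ⟨heq, heq ▸ ?_⟩
  rw [mul_div_assoc, mul_comm (A v _)]
  exact mul_le_mul_of_nonneg_left (iInf₄_le_of_finite (fun u₁ u₂ w₁ w₂ =>
    A u₁ w₂ * A u₂ w₁ / (A u₁ w₁ * A u₂ w₂)) (τ r) v (τ' r') v') hn

/-- worst-case table pair for PRAM re-identification. For a private
table constant equal to `v` off `r` and a released table constant equal to `v'` off
`r'`, and any bijection `π` with `π r = r'`,
`(1/A(τ r, τ' r')) Σ_{t≠r} A(τ t, τ' r') A(τ r, τ'(π t)) / A(τ t, τ'(π t))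
 = (n-1) · A(v, τ' r') A(τ r, v') / (A(τ r, τ' r') A(v, v'))`, and this quantity is
bounded below by `(n-1)` times the minimum cross-ratio of `A`. -/
theorem stmt14 {R R' V V' : Type*} [Fintype R] [Fintype R'] [DecidableEq R]
    [DecidableEq R'] [Fintype V] [Fintype V'] [Nonempty V] [Nonempty V']
    (hcard : Fintype.card R = Fintype.card R') (h2 : 2 ≤ Fintype.card R)
    (A : V → V' → ℝ) (hA : ∀ u v', 0 < A u v')
    (r : R) (r' : R') (v : V) (v' : V')
    (τ : R → V) (hτ : ∀ s, s ≠ r → τ s = v)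
    (τ' : R' → V') (hτ' : ∀ s', s' ≠ r' → τ' s' = v')
    (π : R ≃ R') (hπ : π r = r') :
    (1 / A (τ r) (τ' r')) *
        (∑ t ∈ Finset.univ.erase r,
          A (τ t) (τ' r') * A (τ r) (τ' (π t)) / A (τ t) (τ' (π t)))
      = ((Fintype.card R : ℝ) - 1) *
          (A v (τ' r') * A (τ r) v') / (A (τ r) (τ' r') * A v v') ∧
    ((Fintype.card R : ℝ) - 1) *
        (⨅ u₁ : V, ⨅ u₂ : V, ⨅ w₁ : V', ⨅ w₂ : V',
          (A u₁ w₂ * A u₂ w₁) / (A u₁ w₁ * A u₂ w₂))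
      ≤ (1 / A (τ r) (τ' r')) *
          (∑ t ∈ Finset.univ.erase r,
            A (τ t) (τ' r') * A (τ r) (τ' (π t)) / A (τ t) (τ' (π t))) :=
  stmt14_general A r r' v v' τ hτ τ' hτ' π hπ
end

section
/- For a multi-attribute PRAM mechanism with independent per-attribute transition matrices A_a (each strictly positive, row-stochastic) on an n-record table, the mechanism is a Pk-anonymization with k = 1 + (n − 1) ∏_{a ∈ 𝒜} AR_a, where AR_a = min_{u,v ∈ V_a, u',v' ∈ V'_a} ((A_a)_{u,v'} (A_a)_{v,u'}) / ((A_a)_{u,u'} (A_a)_{v,v'}). -/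
/-!
Fix the original table `τ` and write `w s t = ∏ a, A a (τ s a) (τ' t a)` for the probability
that record `s` is published as record `t` of `τ'`, so that both sides are sums of
`∏ s, w s (π s)` over permutations `π`. If `π r = r'` and `r'' ≠ r'`, composing `π` with the
transposition `(r' r'')` changes only two factors, `w r r' · w s₂ r''` into `w r r'' · w s₂ r'`,
and the cross-ratio bound says this loses at most the factor `c = ∏ a, AR_a`. Hence every one of
the `n - 1` other fibres `{π | π r = r''}` carries at least `c` times the mass of the fibre
`{π | π r = r'}`, and summing the fibres gives the claim for each `τ`, hence for every prior `fT`.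
-/

open Finset

section CrossRatio

variable {α β : Type*}

/-- The paper's `AR`. -/
noncomputable def crossRatioMin (M : α → β → ℝ) : ℝ :=
  ⨅ u : α, ⨅ v : α, ⨅ u' : β, ⨅ v' : β, (M u v' * M v u') / (M u u' * M v v')

lemma crossRatio_nonneg {M : α → β → ℝ} (hM : ∀ u u', 0 < M u u') (u v : α) (u' v' : β) :
    0 ≤ (M u v' * M v u') / (M u u' * M v v') := by
  have := hM u v'; have := hM v u'; have := hM u u'; have := hM v v'
  positivity

lemma crossRatioMin_nonneg {M : α → β → ℝ} (hM : ∀ u u', 0 < M u u') :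
    0 ≤ crossRatioMin M :=
  Real.iInf_nonneg fun _ => Real.iInf_nonneg fun _ => Real.iInf_nonneg fun _ =>
    Real.iInf_nonneg fun _ => crossRatio_nonneg hM _ _ _ _

lemma iInf_le_of_nonneg {ι : Type*} {f : ι → ℝ} (hf : ∀ i, 0 ≤ f i) (i : ι) : ⨅ j, f j ≤ f i :=
  ciInf_le ⟨0, Set.forall_mem_range.2 hf⟩ i

lemma crossRatioMin_mul_le {M : α → β → ℝ} (hM : ∀ u u', 0 < M u u') (u v : α) (u' v' : β) :
    crossRatioMin M * (M u u' * M v v') ≤ M u v' * M v u' := by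
  rw [← le_div_iff₀ (mul_pos (hM u u') (hM v v'))]
  calc crossRatioMin M
      ≤ ⨅ v : α, ⨅ u' : β, ⨅ v' : β, (M u v' * M v u') / (M u u' * M v v') :=
        iInf_le_of_nonneg (fun _ => Real.iInf_nonneg fun _ => Real.iInf_nonneg fun _ =>
          Real.iInf_nonneg fun _ => crossRatio_nonneg hM _ _ _ _) u
    _ ≤ ⨅ u' : β, ⨅ v' : β, (M u v' * M v u') / (M u u' * M v v') :=
        iInf_le_of_nonneg (fun _ => Real.iInf_nonneg fun _ => Real.iInf_nonneg fun _ =>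
          crossRatio_nonneg hM _ _ _ _) v
    _ ≤ ⨅ v' : β, (M u v' * M v u') / (M u u' * M v v') :=
        iInf_le_of_nonneg (fun _ => Real.iInf_nonneg fun _ => crossRatio_nonneg hM _ _ _ _) u'
    _ ≤ (M u v' * M v u') / (M u u' * M v v') :=
        iInf_le_of_nonneg (fun _ => crossRatio_nonneg hM _ _ _ _) v'

/-- The cross ratio of a product of matrices is at least the product of their minimal ones. -/
lemma prod_crossRatioMin_mul_le {𝒜 : Type*} [Fintype 𝒜] {V V' : 𝒜 → Type*}
    {A : ∀ a, V a → V' a → ℝ} (hA : ∀ a u u', 0 < A a u u') (u v : ∀ a, V a)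
    (u' v' : ∀ a, V' a) :
    (∏ a, crossRatioMin (A a)) *
        ((∏ a, A a (u a) (u' a)) * ∏ a, A a (v a) (v' a)) ≤
      (∏ a, A a (u a) (v' a)) * ∏ a, A a (v a) (u' a) := by
  simp only [← prod_mul_distrib]
  exact prod_le_prod
    (fun a _ => mul_nonneg (crossRatioMin_nonneg (hA a))
      (mul_pos (hA a _ _) (hA a _ _)).le)
    (fun a _ => crossRatioMin_mul_le (hA a) _ _ _ _)

end CrossRatio

section Permanent

variable {R : Type*} [Fintype R] [DecidableEq R]

lemma mul_prod_le_prod_of_eq_off_pair {c : ℝ} {g h : R → ℝ} {i j : R} (hij : i ≠ j)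
    (hg : ∀ k, 0 ≤ g k) (hpair : c * (g i * g j) ≤ h i * h j)
    (hrest : ∀ k, k ≠ i → k ≠ j → g k = h k) :
    c * ∏ k, g k ≤ ∏ k, h k := by
  have hcompl : ∏ k ∈ {i, j}ᶜ, g k = ∏ k ∈ {i, j}ᶜ, h k :=
    prod_congr rfl fun k hk => by
      simp only [mem_compl, mem_insert, mem_singleton, not_or] at hk
      exact hrest k hk.1 hk.2
  rw [← prod_mul_prod_compl {i, j} g, ← prod_mul_prod_compl {i, j} h, prod_pair hij,
    prod_pair hij, hcompl, ← mul_assoc]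
  exact mul_le_mul_of_nonneg_right hpair (hcompl ▸ prod_nonneg fun k _ => hg k)

variable {w : R → R → ℝ} {c : ℝ}

lemma mul_prod_le_prod_swap_mul (hw : ∀ s t, 0 ≤ w s t)
    (hc : ∀ u v u' v', c * (w u u' * w v v') ≤ w u v' * w v u')
    {π : Equiv.Perm R} {r r' r'' : R} (hπ : π r = r') (hne : r'' ≠ r') :
    c * ∏ s, w s (π s) ≤ ∏ s, w s ((Equiv.swap r' r'' * π) s) := by
  have hs₂ : π (π.symm r'') = r'' := π.apply_symm_apply r''
  refine mul_prod_le_prod_of_eq_off_pair (i := r) (j := π.symm r'')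
    (fun h => hne (by rw [← hπ, h, hs₂])) (fun s => hw _ _) ?_ fun s hr hs₂' => ?_
  · simpa [hπ, hs₂] using hc r (π.symm r'') r' r''
  · refine congrArg (w s) (Equiv.swap_apply_of_ne_of_ne ?_ ?_).symm
    · exact fun h => hr (π.injective (h.trans hπ.symm))
    · exact fun h => hs₂' (π.injective (h.trans hs₂.symm))

lemma mul_sum_fiber_le_sum_fiber (hw : ∀ s t, 0 ≤ w s t)
    (hc : ∀ u v u' v', c * (w u u' * w v v') ≤ w u v' * w v u')
    (r : R) {r' r'' : R} (hne : r'' ≠ r') :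
    c * ∑ π ∈ univ.filter (fun π : Equiv.Perm R => π r = r'), ∏ s, w s (π s) ≤
      ∑ π ∈ univ.filter (fun π : Equiv.Perm R => π r = r''), ∏ s, w s (π s) := by
  have hfibre : ∑ π ∈ univ.filter (fun π : Equiv.Perm R => π r = r'),
        ∏ s, w s ((Equiv.swap r' r'' * π) s) =
      ∑ π ∈ univ.filter (fun π : Equiv.Perm R => π r = r''), ∏ s, w s (π s) :=
    sum_equiv (Equiv.mulLeft (Equiv.swap r' r''))
      (fun π => by simp [Equiv.swap_apply_eq_iff]) fun _ _ => rfl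
  rw [← hfibre, mul_sum]
  exact sum_le_sum fun π hπ => mul_prod_le_prod_swap_mul hw hc (mem_filter.1 hπ).2 hne

lemma one_add_card_sub_one_mul_le_sum {S : R → ℝ} (r' : R)
    (hS : ∀ r'', r'' ≠ r' → c * S r' ≤ S r'') :
    (1 + ((Fintype.card R : ℝ) - 1) * c) * S r' ≤ ∑ r'', S r'' := by
  have hcard : ((univ.erase r').card : ℝ) = (Fintype.card R : ℝ) - 1 := by
    rw [card_erase_of_mem (mem_univ r'), card_univ,
      Nat.cast_sub (Fintype.card_pos_iff.2 ⟨r'⟩), Nat.cast_one]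
  calc (1 + ((Fintype.card R : ℝ) - 1) * c) * S r'
      = S r' + ∑ _r'' ∈ univ.erase r', c * S r' := by
        rw [sum_const, nsmul_eq_mul, hcard]; ring
    _ ≤ S r' + ∑ r'' ∈ univ.erase r', S r'' :=
        add_le_add_right (sum_le_sum fun r'' hr'' => hS r'' (ne_of_mem_erase hr'')) _
    _ = ∑ r'', S r'' := add_sum_erase _ S (mem_univ r')

lemma one_add_card_sub_one_mul_sum_fiber_le (hw : ∀ s t, 0 ≤ w s t)
    (hc : ∀ u v u' v', c * (w u u' * w v v') ≤ w u v' * w v u') (r r' : R) :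
    (1 + ((Fintype.card R : ℝ) - 1) * c) *
        ∑ π ∈ univ.filter (fun π : Equiv.Perm R => π r = r'), ∏ s, w s (π s) ≤
      ∑ π : Equiv.Perm R, ∏ s, w s (π s) := by
  rw [← sum_fiberwise univ (fun π : Equiv.Perm R => π r)]
  exact one_add_card_sub_one_mul_le_sum
    (S := fun r'' => ∑ π ∈ univ.filter (fun π : Equiv.Perm R => π r = r''), ∏ s, w s (π s)) r'
    fun _ hne => mul_sum_fiber_le_sum_fiber hw hc r hne

end Permanent

theorem stmt15_general {R : Type*} [Fintype R] [DecidableEq R]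
    {𝒜 : Type*} [Fintype 𝒜] [DecidableEq 𝒜]
    (V V' : 𝒜 → Type*) [∀ a, Fintype (V a)]
    (A : ∀ a, V a → V' a → ℝ) (hA : ∀ a u v', 0 < A a u v')
    (fT : (R → ∀ a, V a) → ℝ) (hfT : ∀ τ, 0 ≤ fT τ)
    (τ' : R → ∀ a, V' a) (r r' : R) :
    (1 + ((Fintype.card R : ℝ) - 1) *
        ∏ a, ⨅ u : V a, ⨅ v : V a, ⨅ u' : V' a, ⨅ v' : V' a,
          (A a u v' * A a v u') / (A a u u' * A a v v')) *
      (∑ τ : R → ∀ a, V a, fT τ *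
        ∑ π ∈ Finset.univ.filter (fun π : Equiv.Perm R => π r = r'),
          ∏ s, ∏ a, A a (τ s a) (τ' (π s) a))
    ≤ ∑ τ : R → ∀ a, V a, fT τ *
        ∑ π : Equiv.Perm R, ∏ s, ∏ a, A a (τ s a) (τ' (π s) a) := by
  change (1 + _ * ∏ a, crossRatioMin (A a)) * _ ≤ _
  rw [mul_sum]
  refine sum_le_sum fun τ _ => ?_
  rw [mul_left_comm]
  exact mul_le_mul_of_nonneg_left
    (one_add_card_sub_one_mul_sum_fiber_le
      (fun s t => prod_nonneg fun a _ => (hA a _ _).le)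
      (fun u v u' v' => prod_crossRatioMin_mul_le hA (τ u) (τ v) (τ' u') (τ' v')) r r')
    (hfT τ)

/-- a multi-attribute PRAM mechanism with independent strictly positive
row-stochastic per-attribute matrices `A a` on an `n`-record table is a
Pk-anonymization with `k = 1 + (n-1) ∏_a AR_a`, where
`AR_a = min_{u,v,u',v'} ((A a) u v' · (A a) v u') / ((A a) u u' · (A a) v v')`. -/
theorem stmt15 {R : Type*} [Fintype R] [DecidableEq R] [Nonempty R]
    {𝒜 : Type*} [Fintype 𝒜] [DecidableEq 𝒜]
    (V V' : 𝒜 → Type*) [∀ a, Fintype (V a)] [∀ a, DecidableEq (V a)]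
    [∀ a, Fintype (V' a)] [∀ a, Nonempty (V a)] [∀ a, Nonempty (V' a)]
    (A : ∀ a, V a → V' a → ℝ) (hA : ∀ a u v', 0 < A a u v')
    (hrow : ∀ a u, ∑ v', A a u v' = 1)
    (fT : (R → ∀ a, V a) → ℝ) (hfT : ∀ τ, 0 ≤ fT τ) (hfT1 : ∑ τ, fT τ = 1)
    (τ' : R → ∀ a, V' a) (r r' : R) :
    (1 + ((Fintype.card R : ℝ) - 1) *
        ∏ a, ⨅ u : V a, ⨅ v : V a, ⨅ u' : V' a, ⨅ v' : V' a,
          (A a u v' * A a v u') / (A a u u' * A a v v')) *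
      (∑ τ : R → ∀ a, V a, fT τ *
        ∑ π ∈ Finset.univ.filter (fun π : Equiv.Perm R => π r = r'),
          ∏ s, ∏ a, A a (τ s a) (τ' (π s) a))
    ≤ ∑ τ : R → ∀ a, V a, fT τ *
        ∑ π : Equiv.Perm R, ∏ s, ∏ a, A a (τ s a) (τ' (π s) a) :=
  stmt15_general V V' A hA fT hfT τ' r r'
end

section
/- Retention-replacement perturbation with per-attribute retention probabilities ρ_a on an n-record table is a Pk-anonymization with k = 1 + (n − 1) ∏_{a ∈ 𝒜} ((1 − ρ_a)/(1 + (|V_a| − 1)ρ_a))². -/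
/-!
Fix the original table `τ` and the perturbed table `τ'`. Every entry of the kernel `A a` lies
between `(1 - ρ)/m` and `ρ + (1 - ρ)/m = (1 + (m - 1)ρ)/m`, so changing one column of a record's
likelihood costs at most the factor `(1 - ρ)/(1 + (m - 1)ρ)`, and changing a whole record at most
the product `c` of these factors. Composing a matching `π` with `r ↦ r'` with the transposition of
`r'` and any `r'' ≠ r'` changes two records, so it gives a bijection onto the matchings with
`r ↦ r''` losing at most `c²`. Summing over the `n - 1` choices of `r''` and then averaging over
`τ` yields the bound.
-/

open Finset Equiv

/-- The retention-replacement kernel on `V`: keep a value with probability `ρ`, otherwise draw a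
uniform one. -/
noncomputable def retentionReplacement (ρ : ℝ) (V : Type*) [Fintype V] [DecidableEq V]
    (u v : V) : ℝ :=
  if u = v then ρ + (1 - ρ) / (Fintype.card V : ℝ) else (1 - ρ) / (Fintype.card V : ℝ)

/-- The square root of the paper's `AR_a` for an attribute with `m` values. -/
noncomputable def retentionRatio (ρ : ℝ) (m : ℕ) : ℝ :=
  (1 - ρ) / (1 + ((m : ℝ) - 1) * ρ)

section RetentionReplacement

variable {ρ : ℝ} {V : Type*} [Fintype V] [DecidableEq V]

lemma retentionRatio_nonneg (m : ℕ) (hρ0 : 0 ≤ ρ) (hρ1 : ρ ≤ 1) :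
    0 ≤ retentionRatio ρ m := by
  have : (0 : ℝ) ≤ m := Nat.cast_nonneg m
  unfold retentionRatio
  exact div_nonneg (by linarith) (by nlinarith)

lemma div_card_le_retentionReplacement (hρ0 : 0 ≤ ρ) (u v : V) :
    (1 - ρ) / (Fintype.card V : ℝ) ≤ retentionReplacement ρ V u v := by
  unfold retentionReplacement
  split_ifs <;> linarith

lemma retentionReplacement_le (hρ0 : 0 ≤ ρ) (u v : V) :
    retentionReplacement ρ V u v ≤ ρ + (1 - ρ) / (Fintype.card V : ℝ) := by
  unfold retentionReplacement
  split_ifs <;> linarith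

lemma retentionReplacement_nonneg (hρ0 : 0 ≤ ρ) (hρ1 : ρ ≤ 1) (u v : V) :
    0 ≤ retentionReplacement ρ V u v :=
  (div_nonneg (by linarith) (Nat.cast_nonneg _)).trans (div_card_le_retentionReplacement hρ0 u v)

lemma retentionRatio_mul_retentionReplacement_le (hρ0 : 0 ≤ ρ) (hρ1 : ρ ≤ 1) (u v u' v' : V) :
    retentionRatio ρ (Fintype.card V) * retentionReplacement ρ V u' v' ≤
      retentionReplacement ρ V u v := by
  have hm : 1 ≤ Fintype.card V := Fintype.card_pos_iff.mpr ⟨u⟩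
  have hmR : (1 : ℝ) ≤ Fintype.card V := by exact_mod_cast hm
  have hmax : retentionRatio ρ (Fintype.card V) * (ρ + (1 - ρ) / (Fintype.card V : ℝ)) =
      (1 - ρ) / (Fintype.card V : ℝ) := by
    have hsum : ρ + (1 - ρ) / (Fintype.card V : ℝ) =
        (1 + ((Fintype.card V : ℝ) - 1) * ρ) / Fintype.card V := by
      field_simp
      ring
    rw [retentionRatio, hsum, div_mul_div_cancel₀ (by nlinarith)]
  calc retentionRatio ρ (Fintype.card V) * retentionReplacement ρ V u' v'
      ≤ retentionRatio ρ (Fintype.card V) * (ρ + (1 - ρ) / (Fintype.card V : ℝ)) :=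
        mul_le_mul_of_nonneg_left (retentionReplacement_le hρ0 u' v')
          (retentionRatio_nonneg _ hρ0 hρ1)
    _ = (1 - ρ) / (Fintype.card V : ℝ) := hmax
    _ ≤ retentionReplacement ρ V u v := div_card_le_retentionReplacement hρ0 u v

end RetentionReplacement

lemma prod_retentionRatio_mul_le {𝒜 : Type*} [Fintype 𝒜] {V : 𝒜 → Type*}
    [∀ a, Fintype (V a)] [∀ a, DecidableEq (V a)] {ρ : 𝒜 → ℝ}
    (hρ0 : ∀ a, 0 ≤ ρ a) (hρ1 : ∀ a, ρ a ≤ 1) (x y y' : ∀ a, V a) :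
    (∏ a, retentionRatio (ρ a) (Fintype.card (V a))) *
        ∏ a, retentionReplacement (ρ a) (V a) (x a) (y' a) ≤
      ∏ a, retentionReplacement (ρ a) (V a) (x a) (y a) := by
  rw [← prod_mul_distrib]
  exact prod_le_prod
    (fun a _ => mul_nonneg (retentionRatio_nonneg _ (hρ0 a) (hρ1 a))
      (retentionReplacement_nonneg (hρ0 a) (hρ1 a) _ _))
    (fun a _ => retentionRatio_mul_retentionReplacement_le (hρ0 a) (hρ1 a) _ _ _ _)

section Matchings

variable {R : Type*} [Fintype R] [DecidableEq R] {p : R → R → ℝ} {c : ℝ}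

lemma sq_mul_prod_le_prod_swap_mul (hc : 0 ≤ c) (hp : ∀ s t, 0 ≤ p s t)
    (hpc : ∀ s t t', c * p s t' ≤ p s t) {t t' : R} (htt' : t ≠ t') (π : Perm R) :
    c ^ 2 * ∏ s, p s (π s) ≤ ∏ s, p s ((swap t t' * π) s) := by
  set w : R → ℝ := fun u => (if u = t then c else 1) * (if u = t' then c else 1)
  have hw : ∏ s, w (π s) = c ^ 2 := by
    rw [Equiv.prod_comp π w, prod_mul_distrib, prod_ite_eq', prod_ite_eq']
    simp [sq]
  have hwp : ∀ u s, w u * p s u ≤ p s (swap t t' u) := by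
    intro u s
    by_cases hut : u = t
    · subst hut
      simpa [w, htt'] using hpc s t' u
    by_cases hut' : u = t'
    · subst hut'
      simpa [w, Ne.symm htt'] using hpc s t u
    · simp [w, hut, hut', swap_apply_of_ne_of_ne hut hut']
  rw [← hw, ← prod_mul_distrib]
  exact prod_le_prod (fun s _ => mul_nonneg (by positivity) (hp _ _)) (fun s _ => hwp _ _)

lemma sq_mul_sum_fiber_le (hc : 0 ≤ c) (hp : ∀ s t, 0 ≤ p s t)
    (hpc : ∀ s t t', c * p s t' ≤ p s t) (r : R) {t t' : R} (htt' : t ≠ t') :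
    c ^ 2 * ∑ π ∈ univ.filter (fun π : Perm R => π r = t), ∏ s, p s (π s) ≤
      ∑ π ∈ univ.filter (fun π : Perm R => π r = t'), ∏ s, p s (π s) := by
  have hfiber : ∑ π ∈ univ.filter (fun π : Perm R => π r = t), ∏ s, p s ((swap t t' * π) s) =
      ∑ π ∈ univ.filter (fun π : Perm R => π r = t'), ∏ s, p s (π s) := by
    refine sum_equiv (Equiv.mulLeft (swap t t')) (fun π => ?_) (fun _ _ => rfl)
    simp [swap_apply_eq_iff]
  rw [mul_sum, ← hfiber]
  exact sum_le_sum fun π _ => sq_mul_prod_le_prod_swap_mul hc hp hpc htt' π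

lemma one_add_mul_sq_mul_sum_fiber_le (hc : 0 ≤ c) (hp : ∀ s t, 0 ≤ p s t)
    (hpc : ∀ s t t', c * p s t' ≤ p s t) (r r' : R) :
    (1 + ((Fintype.card R : ℝ) - 1) * c ^ 2) *
        ∑ π ∈ univ.filter (fun π : Perm R => π r = r'), ∏ s, p s (π s) ≤
      ∑ π : Perm R, ∏ s, p s (π s) := by
  set S : R → ℝ := fun t => ∑ π ∈ univ.filter (fun π : Perm R => π r = t), ∏ s, p s (π s)
  have hcard : ((univ.erase r').card : ℝ) = (Fintype.card R : ℝ) - 1 := by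
    rw [card_erase_of_mem (mem_univ r'), card_univ,
      Nat.cast_sub (Fintype.card_pos_iff.mpr ⟨r'⟩), Nat.cast_one]
  have hothers : ((Fintype.card R : ℝ) - 1) * (c ^ 2 * S r') ≤ ∑ t ∈ univ.erase r', S t := by
    rw [← hcard, ← nsmul_eq_mul, ← sum_const]
    exact sum_le_sum fun t ht => sq_mul_sum_fiber_le hc hp hpc r (ne_of_mem_erase ht).symm
  calc (1 + ((Fintype.card R : ℝ) - 1) * c ^ 2) * S r'
      = S r' + ((Fintype.card R : ℝ) - 1) * (c ^ 2 * S r') := by ring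
    _ ≤ S r' + ∑ t ∈ univ.erase r', S t := by gcongr
    _ = ∑ t, S t := add_sum_erase _ S (mem_univ r')
    _ = ∑ π : Perm R, ∏ s, p s (π s) := sum_fiberwise univ (fun π : Perm R => π r) _

end Matchings

theorem stmt16_general {R : Type*} [Fintype R] [DecidableEq R]
    {𝒜 : Type*} [Fintype 𝒜] [DecidableEq 𝒜]
    (V : 𝒜 → Type*) [∀ a, Fintype (V a)] [∀ a, DecidableEq (V a)]
    (ρ : 𝒜 → ℝ) (hρ0 : ∀ a, 0 ≤ ρ a) (hρ1 : ∀ a, ρ a < 1)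
    (A : ∀ a, V a → V a → ℝ)
    (hA : ∀ a u v, A a u v =
      if u = v then ρ a + (1 - ρ a) / (Fintype.card (V a) : ℝ)
      else (1 - ρ a) / (Fintype.card (V a) : ℝ))
    (fT : (R → ∀ a, V a) → ℝ) (hfT : ∀ τ, 0 ≤ fT τ)
    (τ' : R → ∀ a, V a) (r r' : R) :
    (1 + ((Fintype.card R : ℝ) - 1) *
        ∏ a, ((1 - ρ a) / (1 + ((Fintype.card (V a) : ℝ) - 1) * ρ a)) ^ 2) *
      (∑ τ : R → ∀ a, V a, fT τ *
        ∑ π ∈ Finset.univ.filter (fun π : Equiv.Perm R => π r = r'),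
          ∏ s, ∏ a, A a (τ s a) (τ' (π s) a))
    ≤ ∑ τ : R → ∀ a, V a, fT τ *
        ∑ π : Equiv.Perm R, ∏ s, ∏ a, A a (τ s a) (τ' (π s) a) := by
  obtain rfl : A = fun a => retentionReplacement (ρ a) (V a) := by
    funext a u v
    exact hA a u v
  have hρ1' : ∀ a, ρ a ≤ 1 := fun a => (hρ1 a).le
  set c := ∏ a, retentionRatio (ρ a) (Fintype.card (V a))
  have hc : 0 ≤ c := prod_nonneg fun a _ => retentionRatio_nonneg _ (hρ0 a) (hρ1' a)
  have hAR : ∏ a, ((1 - ρ a) / (1 + ((Fintype.card (V a) : ℝ) - 1) * ρ a)) ^ 2 = c ^ 2 := by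
    rw [prod_pow]
    rfl
  rw [hAR, mul_sum]
  refine sum_le_sum fun τ _ => ?_
  rw [mul_left_comm]
  refine mul_le_mul_of_nonneg_left (one_add_mul_sq_mul_sum_fiber_le
    (p := fun s t => ∏ a, retentionReplacement (ρ a) (V a) (τ s a) (τ' t a))
    hc (fun s t => ?_) (fun s t t' => ?_) r r') (hfT τ)
  · exact prod_nonneg fun a _ => retentionReplacement_nonneg (hρ0 a) (hρ1' a) _ _
  · exact prod_retentionRatio_mul_le hρ0 hρ1' (τ s) (τ' t) (τ' t')

/-- retention-replacement perturbation with per-attribute retention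
probabilities `ρ a` on an `n`-record table is a Pk-anonymization with
`k = 1 + (n-1) ∏_a ((1 - ρ_a)/(1 + (|V_a| - 1) ρ_a))²`. -/
theorem stmt16 {R : Type*} [Fintype R] [DecidableEq R] [Nonempty R]
    {𝒜 : Type*} [Fintype 𝒜] [DecidableEq 𝒜]
    (V : 𝒜 → Type*) [∀ a, Fintype (V a)] [∀ a, DecidableEq (V a)]
    (hm : ∀ a, 2 ≤ Fintype.card (V a))
    (ρ : 𝒜 → ℝ) (hρ0 : ∀ a, 0 ≤ ρ a) (hρ1 : ∀ a, ρ a < 1)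
    (A : ∀ a, V a → V a → ℝ)
    (hA : ∀ a u v, A a u v =
      if u = v then ρ a + (1 - ρ a) / (Fintype.card (V a) : ℝ)
      else (1 - ρ a) / (Fintype.card (V a) : ℝ))
    (fT : (R → ∀ a, V a) → ℝ) (hfT : ∀ τ, 0 ≤ fT τ) (hfT1 : ∑ τ, fT τ = 1)
    (τ' : R → ∀ a, V a) (r r' : R) :
    (1 + ((Fintype.card R : ℝ) - 1) *
        ∏ a, ((1 - ρ a) / (1 + ((Fintype.card (V a) : ℝ) - 1) * ρ a)) ^ 2) *
      (∑ τ : R → ∀ a, V a, fT τ *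
        ∑ π ∈ Finset.univ.filter (fun π : Equiv.Perm R => π r = r'),
          ∏ s, ∏ a, A a (τ s a) (τ' (π s) a))
    ≤ ∑ τ : R → ∀ a, V a, fT τ *
        ∑ π : Equiv.Perm R, ∏ s, ∏ a, A a (τ s a) (τ' (π s) a) :=
  stmt16_general V ρ hρ0 hρ1 A hA fT hfT τ' r r'
end

section
/- Fix n ≥ 2 and finite attribute cardinalities m_a ≥ 2. The function ρ ↦ 1 + (n − 1) ∏_{a} ((1 − ρ)/(1 + (m_a − 1)ρ))² is continuous and strictly monotonically decreasing on [0, 1], taking value n at ρ = 0 and value 1 at ρ = 1; hence for every k ∈ [1, n] there exists a unique ρ ∈ [0, 1] achieving Pk-anonymity with equality. -/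
/-!
Each factor `(1 - ρ) / (1 + (m_a - 1) ρ)` is nonnegative and strictly decreasing on `[0, 1]`,
so the product of their squares is strictly decreasing; it equals `1` at `ρ = 0` and `0` at
`ρ = 1`. The intermediate value theorem gives a `ρ` for each `k ∈ [1, n]`, and strict
monotonicity makes it unique.
-/

open Set

namespace Finset

variable {ι R : Type*} [CommSemiring R] [PartialOrder R] [IsStrictOrderedRing R]

lemma prod_lt_prod_of_nonempty_of_nonneg {s : Finset ι} {f g : ι → R}
    (hf : ∀ i ∈ s, 0 ≤ f i) (hfg : ∀ i ∈ s, f i < g i) (hs : s.Nonempty) :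
    ∏ i ∈ s, f i < ∏ i ∈ s, g i := by
  induction hs using Finset.Nonempty.cons_induction with
  | singleton i => simpa using hfg i (mem_singleton_self i)
  | cons i s hi _ ih =>
    simp only [prod_cons, forall_mem_cons] at hf hfg ⊢
    exact mul_lt_mul'' hfg.1 (ih hf.2 hfg.2) hf.1 (prod_nonneg hf.2)

lemma strictAntiOn_prod {α : Type*} [Preorder α] {t : Finset ι} {s : Set α} {f : ι → α → R}
    (hf : ∀ i ∈ t, StrictAntiOn (f i) s) (hf0 : ∀ i ∈ t, ∀ x ∈ s, 0 ≤ f i x)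
    (ht : t.Nonempty) :
    StrictAntiOn (fun x => ∏ i ∈ t, f i x) s := fun _ hx _ hy hxy =>
  prod_lt_prod_of_nonempty_of_nonneg (fun i hi => hf0 i hi _ hy)
    (fun i hi => hf i hi hx hy hxy) ht

end Finset

theorem StrictAntiOn.existsUnique_eq_of_continuousOn {α δ : Type*}
    [ConditionallyCompleteLinearOrder α] [TopologicalSpace α] [OrderTopology α]
    [DenselyOrdered α] [LinearOrder δ] [TopologicalSpace δ] [OrderClosedTopology δ]
    {f : α → δ} {a b : α} (hf : StrictAntiOn f (Icc a b)) (hab : a ≤ b)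
    (hc : ContinuousOn f (Icc a b)) :
    ∀ k ∈ Icc (f b) (f a), ∃! x, x ∈ Icc a b ∧ f x = k := by
  intro k hk
  obtain ⟨x, hx, rfl⟩ := intermediate_value_Icc' hab hc hk
  exact ⟨x, ⟨hx, rfl⟩, fun y ⟨hy, hfy⟩ => hf.injOn hy hx hfy⟩

section RetentionFactor

variable {c : ℝ}

lemma one_add_mul_pos_of_mem_Icc (hc : -1 < c) {ρ : ℝ} (hρ : ρ ∈ Icc (0 : ℝ) 1) :
    0 < 1 + c * ρ := by
  obtain ⟨h0, h1⟩ := hρ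
  rcases h0.eq_or_lt with rfl | h0
  · simp
  · nlinarith [mul_pos h0 (neg_lt_iff_pos_add'.mp hc)]

lemma continuousOn_retention (hc : -1 < c) :
    ContinuousOn (fun ρ : ℝ => (1 - ρ) / (1 + c * ρ)) (Icc 0 1) :=
  (continuousOn_const.sub continuousOn_id).div
    (continuousOn_const.add (continuousOn_const.mul continuousOn_id))
    fun _ hρ => (one_add_mul_pos_of_mem_Icc hc hρ).ne'

lemma retention_nonneg (hc : -1 < c) {ρ : ℝ} (hρ : ρ ∈ Icc (0 : ℝ) 1) :
    0 ≤ (1 - ρ) / (1 + c * ρ) :=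
  div_nonneg (by linarith [hρ.2]) (one_add_mul_pos_of_mem_Icc hc hρ).le

lemma strictAntiOn_retention (hc : -1 < c) :
    StrictAntiOn (fun ρ : ℝ => (1 - ρ) / (1 + c * ρ)) (Icc 0 1) := by
  intro x hx y hy hxy
  rw [div_lt_div_iff₀ (one_add_mul_pos_of_mem_Icc hc hy) (one_add_mul_pos_of_mem_Icc hc hx)]
  -- the cross-multiplied difference is `(1 + c) (y - x)`
  nlinarith

lemma strictAntiOn_retention_sq (hc : -1 < c) :
    StrictAntiOn (fun ρ : ℝ => ((1 - ρ) / (1 + c * ρ)) ^ 2) (Icc 0 1) := fun _ hx _ hy hxy =>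
  pow_lt_pow_left₀ (strictAntiOn_retention hc hx hy hxy) (retention_nonneg hc hy) two_ne_zero

end RetentionFactor

/-- the function `k(ρ) = 1 + (n-1) ∏_a ((1-ρ)/(1+(m_a-1)ρ))²` is
continuous and strictly decreasing on `[0,1]`, with `k(0) = n` and `k(1) = 1`; hence
every `k ∈ [1, n]` is achieved by a unique `ρ ∈ [0,1]`. -/
theorem stmt17 {𝒜 : Type*} [Fintype 𝒜] [Nonempty 𝒜]
    (m : 𝒜 → ℕ) (hm : ∀ a, 2 ≤ m a) (n : ℕ) (hn : 2 ≤ n) :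
    let f : ℝ → ℝ := fun ρ => 1 + ((n : ℝ) - 1) *
      ∏ a, ((1 - ρ) / (1 + ((m a : ℝ) - 1) * ρ)) ^ 2
    ContinuousOn f (Set.Icc 0 1) ∧ StrictAntiOn f (Set.Icc 0 1) ∧
    f 0 = (n : ℝ) ∧ f 1 = 1 ∧
    ∀ k ∈ Set.Icc (1 : ℝ) (n : ℝ), ∃! ρ, ρ ∈ Set.Icc (0 : ℝ) 1 ∧ f ρ = k := by
  intro f
  have hc a : -1 < (m a : ℝ) - 1 := by
    have : (2 : ℝ) ≤ m a := by exact_mod_cast hm a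
    linarith
  have hn1 : 0 < (n : ℝ) - 1 := by
    have : (2 : ℝ) ≤ n := by exact_mod_cast hn
    linarith
  have hcont : ContinuousOn f (Icc 0 1) :=
    continuousOn_const.add <| continuousOn_const.mul <|
      continuousOn_finsetProd _ fun a _ => (continuousOn_retention (hc a)).pow 2
  have hanti : StrictAntiOn f (Icc 0 1) :=
    ((strictMono_mul_left_of_pos hn1).comp_strictAntiOn
      (Finset.strictAntiOn_prod (fun a _ => strictAntiOn_retention_sq (hc a))
        (fun _ _ _ _ => sq_nonneg _) Finset.univ_nonempty)).const_add 1
  have h0 : f 0 = n := by simp [f]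
  have h1 : f 1 = 1 := by simp [f]
  refine ⟨hcont, hanti, h0, h1, ?_⟩
  simpa only [h0, h1] using hanti.existsUnique_eq_of_continuousOn zero_le_one hcont
end
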